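/- arXiv:1505.07953 — 11 statements merged into one kernel-verified Lean document; each statement's English description precedes it below -/
import Mathlib

section
/- Let w be a smooth real function of two variables (x,s) on the domain {(x,s) : 0 < s and s² < x}, let f, g be real functions of x, and define ψ(x,s) := w(x,s)·√(x − s²). Then at any point of the domain, 2·∂₁w + (1/s)·[1 − (f(x)+g(x)s²)(x−s²)]·∂₂w + (f(x)+g(x)s²)·w = 0 holds if and only if ∂₁ψ + (1/(2s))·[1 − (f(x)+g(x)s²)(x−s²)]·∂₂ψ = 0 holds. -/
open Set

noncomputable def d1 (φ : ℝ → ℝ → ℝ) (x s : ℝ) : ℝ := deriv (fun t => φ t s) x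

noncomputable def d2 (φ : ℝ → ℝ → ℝ) (x s : ℝ) : ℝ := deriv (fun t => φ x t) s

/-- with ψ = w·√(x−s²) on {0 < s, s² < x}, the equation
2w₁ + (1/s)[1 − (f+gs²)(x−s²)]w₂ + (f+gs²)w = 0 is equivalent to
ψ₁ + (1/(2s))[1 − (f+gs²)(x−s²)]ψ₂ = 0. -/
theorem stmt_3 (w : ℝ → ℝ → ℝ)
    (hw : ContDiffOn ℝ (⊤ : ℕ∞) (fun p : ℝ × ℝ => w p.1 p.2)
      {p : ℝ × ℝ | 0 < p.2 ∧ p.2 ^ 2 < p.1})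
    (f g : ℝ → ℝ) (ψ : ℝ → ℝ → ℝ)
    (hψ : ∀ x s : ℝ, ψ x s = w x s * Real.sqrt (x - s ^ 2))
    (x s : ℝ) (hs : 0 < s) (hxs : s ^ 2 < x) :
    (2 * d1 w x s + (1 / s) * (1 - (f x + g x * s ^ 2) * (x - s ^ 2)) * d2 w x s +
        (f x + g x * s ^ 2) * w x s = 0) ↔
      (d1 ψ x s + (1 / (2 * s)) * (1 - (f x + g x * s ^ 2) * (x - s ^ 2)) *
        d2 ψ x s = 0) := by
  have hopen : IsOpen {p : ℝ × ℝ | 0 < p.2 ∧ p.2 ^ 2 < p.1} := by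
    have h1 : IsOpen {p : ℝ × ℝ | 0 < p.2} := isOpen_lt continuous_const continuous_snd
    have h2 : IsOpen {p : ℝ × ℝ | p.2 ^ 2 < p.1} :=
      isOpen_lt (continuous_snd.pow 2) continuous_fst
    exact h1.inter h2
  have hmem : (x, s) ∈ {p : ℝ × ℝ | 0 < p.2 ∧ p.2 ^ 2 < p.1} := ⟨hs, hxs⟩
  have hdiff : DifferentiableAt ℝ (fun p : ℝ × ℝ => w p.1 p.2) (x, s) :=
    (hw.contDiffAt (hopen.mem_nhds hmem)).differentiableAt (by simp)
  have hd1w : DifferentiableAt ℝ (fun t => w t s) x :=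
    hdiff.comp (f := fun t : ℝ => (t, s)) x (differentiableAt_id.prodMk (differentiableAt_const s))
  have hd2w : DifferentiableAt ℝ (fun t => w x t) s :=
    hdiff.comp (f := fun t : ℝ => (x, t)) s ((differentiableAt_const x).prodMk differentiableAt_id)
  have hpos : (0:ℝ) < x - s ^ 2 := by linarith
  set r := Real.sqrt (x - s ^ 2) with hrdef
  have hr : 0 < r := Real.sqrt_pos.2 hpos
  have hr2 : r ^ 2 = x - s ^ 2 := Real.sq_sqrt hpos.le
  have hsq1 : HasDerivAt (fun t => Real.sqrt (t - s ^ 2)) (1 / (2 * r)) x := by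
    have h0 : HasDerivAt (fun t : ℝ => t - s ^ 2) 1 x := (hasDerivAt_id x).sub_const _
    have h1 : HasDerivAt (fun t => Real.sqrt (t - s ^ 2)) (1 / (2 * Real.sqrt (x - s ^ 2)) * 1) x :=
      (Real.hasDerivAt_sqrt hpos.ne').comp x h0
    simpa [← hrdef] using h1
  have hsq2 : HasDerivAt (fun t => Real.sqrt (x - t ^ 2)) (-(s / r)) s := by
    have h0 : HasDerivAt (fun t : ℝ => x - t ^ 2) (-(2 * s)) s := by
      simpa using (hasDerivAt_pow 2 s).const_sub x
    have h1 : HasDerivAt (fun t => Real.sqrt (x - t ^ 2)) (1 / (2 * Real.sqrt (x - s ^ 2)) * -(2 * s)) s :=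
      (Real.hasDerivAt_sqrt hpos.ne').comp s h0
    convert h1 using 1
    rw [← hrdef]
    field_simp
  have hψ1 : d1 ψ x s = d1 w x s * r + w x s * (1 / (2 * r)) := by
    have he : (fun t => ψ t s) = fun t => w t s * Real.sqrt (t - s ^ 2) :=
      funext fun t => hψ t s
    have := (hd1w.hasDerivAt.mul hsq1)
    simpa [d1, he, ← hrdef, Pi.mul_def] using this.deriv
  have hψ2 : d2 ψ x s = d2 w x s * r + w x s * (-(s / r)) := by
    have he : (fun t => ψ x t) = fun t => w x t * Real.sqrt (x - t ^ 2) :=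
      funext fun t => hψ x t
    have := (hd2w.hasDerivAt.mul hsq2)
    simpa [d2, he, ← hrdef, Pi.mul_def] using this.deriv
  have key : d1 ψ x s + (1 / (2 * s)) * (1 - (f x + g x * s ^ 2) * (x - s ^ 2)) * d2 ψ x s
      = (r / 2) * (2 * d1 w x s + (1 / s) * (1 - (f x + g x * s ^ 2) * (x - s ^ 2)) * d2 w x s +
        (f x + g x * s ^ 2) * w x s) := by
    rw [hψ1, hψ2, ← hr2]
    field_simp
    ring
  rw [key]
  constructor
  · intro h; rw [h, mul_zero]
  · intro h
    rcases mul_eq_zero.1 h with h' | h'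
    · exact absurd h' (by positivity)
    · exact h'
end

section
/- Let I ⊆ ℝ be an open interval, f, g : I → ℝ continuous, let F : I → ℝ be an antiderivative of x ↦ f(x) + x·g(x), set E(x) := e^{F(x)}, and let G : I → ℝ be an antiderivative of x ↦ g(x)·E(x). Define η(x,s) := (x − s²)/(E(x) − (x − s²)·G(x)) on the set of (x,s) with x ∈ I and E(x) − (x − s²)G(x) ≠ 0. Then at every such point with s ≠ 0, η satisfies ∂₁η + (1/(2s))·[1 − (f(x)+g(x)s²)(x−s²)]·∂₂η = 0. -/
/-! The transport operator `L = ∂₁ + c ∂₂`, with `c = (1 - (f + g s²)(x - s²)) / (2s)`, multiplies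
both the numerator `u = x - s²` and the denominator `E - u G` of `η` by the same factor
`f + g s²`: indeed `L u = 1 - 2 s c = (f + g s²) u`, and since `E' = (f + x g) E`, `G' = g E`,
`L (E - u G) = (f + x g) E - (f + g s²) u G - u g E = (f + g s²) (E - u G)`.
By the quotient rule `L (u / D) = (D L u - u L D) / D²`, hence `L η = 0`. -/

open Set

theorem d1_add_mul_d2_div_eq_zero {U W : ℝ → ℝ → ℝ} {x s c h U₁ U₂ W₁ W₂ : ℝ}
    (hU₁ : HasDerivAt (fun t => U t s) U₁ x) (hU₂ : HasDerivAt (fun t => U x t) U₂ s)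
    (hW₁ : HasDerivAt (fun t => W t s) W₁ x) (hW₂ : HasDerivAt (fun t => W x t) W₂ s)
    (hW : W x s ≠ 0) (hLU : U₁ + c * U₂ = h * U x s) (hLW : W₁ + c * W₂ = h * W x s) :
    d1 (fun x s => U x s / W x s) x s + c * d2 (fun x s => U x s / W x s) x s = 0 := by
  rw [d1, d2, (hU₁.fun_div hW₁ hW).deriv, (hU₂.fun_div hW₂ hW).deriv]
  field_simp
  linear_combination W x s * hLU - U x s * hLW

theorem stmt_4_general (a b : ℝ) (f g F G : ℝ → ℝ)
    (hF : ∀ x ∈ Ioo a b, HasDerivAt F (f x + x * g x) x)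
    (hG : ∀ x ∈ Ioo a b, HasDerivAt G (g x * Real.exp (F x)) x)
    (η : ℝ → ℝ → ℝ)
    (hη : ∀ x s : ℝ, η x s = (x - s ^ 2) / (Real.exp (F x) - (x - s ^ 2) * G x)) :
    ∀ x s : ℝ, x ∈ Ioo a b → Real.exp (F x) - (x - s ^ 2) * G x ≠ 0 → s ≠ 0 →
      d1 η x s + (1 / (2 * s)) * (1 - (f x + g x * s ^ 2) * (x - s ^ 2)) *
        d2 η x s = 0 := by
  intro x s hx hD hs
  obtain rfl : η = fun x s => (x - s ^ 2) / (Real.exp (F x) - (x - s ^ 2) * G x) := funext₂ hη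
  have hU₁ : HasDerivAt (fun t => t - s ^ 2) 1 x := (hasDerivAt_id' x).sub_const _
  have hU₂ : HasDerivAt (fun t => x - t ^ 2) (-(2 * s)) s := by
    simpa using (hasDerivAt_pow 2 s).const_sub x
  refine d1_add_mul_d2_div_eq_zero (h := f x + g x * s ^ 2) hU₁ hU₂
    ((hF x hx).exp.sub (hU₁.mul (hG x hx))) ((hU₂.mul_const (G x)).const_sub _) hD ?_ ?_
  · field_simp
    ring
  · field_simp
    ring

/-- η(x,s) = (x−s²)/(E(x) − (x−s²)G(x)), with E = e^F, F' = f + x·g,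
G' = g·E, solves the transport equation η₁ + (1/(2s))[1 − (f+gs²)(x−s²)]η₂ = 0 at
points where the denominator does not vanish and s ≠ 0. -/
theorem stmt_4 (a b : ℝ) (f g F G : ℝ → ℝ)
    (hf : ContinuousOn f (Ioo a b)) (hg : ContinuousOn g (Ioo a b))
    (hF : ∀ x ∈ Ioo a b, HasDerivAt F (f x + x * g x) x)
    (hG : ∀ x ∈ Ioo a b, HasDerivAt G (g x * Real.exp (F x)) x)
    (η : ℝ → ℝ → ℝ)
    (hη : ∀ x s : ℝ, η x s = (x - s ^ 2) / (Real.exp (F x) - (x - s ^ 2) * G x)) :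
    ∀ x s : ℝ, x ∈ Ioo a b → Real.exp (F x) - (x - s ^ 2) * G x ≠ 0 → s ≠ 0 →
      d1 η x s + (1 / (2 * s)) * (1 - (f x + g x * s ^ 2) * (x - s ^ 2)) *
        d2 η x s = 0 :=
  stmt_4_general a b f g F G hF hG η hη
end

section
/- Let I ⊆ ℝ be an open interval, f, g : I → ℝ continuous, E(x) := e^{F(x)} where F is an antiderivative of x ↦ f(x)+x·g(x), G an antiderivative of x ↦ g(x)E(x), and η(x,s) := (x−s²)/(E(x) − (x−s²)G(x)). Let Φ : ℝ → ℝ be continuously differentiable, and let φ be a smooth function of (x,s) on a domain contained in {(x,s) : x ∈ I, 0 < s, s² < x, E(x) − (x−s²)G(x) ≠ 0} such that φ(x,s) − s·∂₂φ(x,s) = Φ(η(x,s))/√(x − s²) on this domain. Then φ satisfies the Douglas PDE: ∂₂₂φ − 2(∂₁φ − s·∂₁₂φ) = (f(x)+g(x)s²)·(φ − s·∂₂φ + (x−s²)·∂₂₂φ) on the domain. -/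
open Set

lemma alg_key (fx gx E Gx Ph dPh x s r c4 : ℝ) (hr : r ≠ 0) (hs : s ≠ 0)
    (hQ : E - (x - s ^ 2) * Gx ≠ 0) (hrr : r ^ 2 = x - s ^ 2)
    (hc4 : s * c4 =
      -((dPh * ((-(2 * s) * (E - (x - s ^ 2) * Gx) - (x - s ^ 2) * (2 * s * Gx)) /
            (E - (x - s ^ 2) * Gx) ^ 2) * r -
          Ph * (1 / (2 * r) * (-(2 * s)))) / r ^ 2)) :
    c4 - 2 * ((dPh * ((1 * (E - (x - s ^ 2) * Gx) -
          (x - s ^ 2) * (E * (fx + x * gx) - (1 * Gx + (x - s ^ 2) * (gx * E)))) /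
            (E - (x - s ^ 2) * Gx) ^ 2) * r -
        Ph * (1 / (2 * r) * 1)) / r ^ 2) =
      (fx + gx * s ^ 2) * (Ph / r + (x - s ^ 2) * c4) := by
  have h4 : c4 =
      (-((dPh * ((-(2 * s) * (E - (x - s ^ 2) * Gx) - (x - s ^ 2) * (2 * s * Gx)) /
            (E - (x - s ^ 2) * Gx) ^ 2) * r -
          Ph * (1 / (2 * r) * (-(2 * s)))) / r ^ 2)) / s :=
    eq_div_of_mul_eq hs (by linear_combination hc4)
  subst h4
  have hx : x = r ^ 2 + s ^ 2 := by linarith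
  subst hx
  have hQ' : E - r ^ 2 * Gx ≠ 0 := by
    have : r ^ 2 + s ^ 2 - s ^ 2 = r ^ 2 := by ring
    rw [this] at hQ; exact hQ
  field_simp
  ring

/-- if φ − s·φ₂ = Φ(η)/√(x−s²) with η the first integral built from
f, g, then φ satisfies the Douglas PDE
φ₂₂ − 2(φ₁ − sφ₁₂) = (f+gs²)(φ − sφ₂ + (x−s²)φ₂₂). -/
theorem stmt_5 (a b : ℝ) (f g F G : ℝ → ℝ)
    (hf : ContinuousOn f (Ioo a b)) (hg : ContinuousOn g (Ioo a b))
    (hF : ∀ x ∈ Ioo a b, HasDerivAt F (f x + x * g x) x)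
    (hG : ∀ x ∈ Ioo a b, HasDerivAt G (g x * Real.exp (F x)) x)
    (η : ℝ → ℝ → ℝ)
    (hη : ∀ x s : ℝ, η x s = (x - s ^ 2) / (Real.exp (F x) - (x - s ^ 2) * G x))
    (Φ : ℝ → ℝ) (hΦ : ContDiff ℝ 1 Φ)
    (D : Set (ℝ × ℝ)) (hDopen : IsOpen D)
    (hDsub : D ⊆ {p : ℝ × ℝ | p.1 ∈ Ioo a b ∧ 0 < p.2 ∧ p.2 ^ 2 < p.1 ∧
      Real.exp (F p.1) - (p.1 - p.2 ^ 2) * G p.1 ≠ 0})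
    (φ : ℝ → ℝ → ℝ) (hφ : ContDiffOn ℝ (⊤ : ℕ∞) (fun p : ℝ × ℝ => φ p.1 p.2) D)
    (heq : ∀ p ∈ D, φ p.1 p.2 - p.2 * d2 φ p.1 p.2 =
      Φ (η p.1 p.2) / Real.sqrt (p.1 - p.2 ^ 2)) :
    ∀ p ∈ D, d2 (d2 φ) p.1 p.2 - 2 * (d1 φ p.1 p.2 - p.2 * d1 (d2 φ) p.1 p.2) =
      (f p.1 + g p.1 * p.2 ^ 2) *
        (φ p.1 p.2 - p.2 * d2 φ p.1 p.2 + (p.1 - p.2 ^ 2) * d2 (d2 φ) p.1 p.2) := by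
  -- smoothness infrastructure for φ
  have hΨat : ∀ q ∈ D, ContDiffAt ℝ (⊤ : ℕ∞) (fun q : ℝ × ℝ => φ q.1 q.2) q :=
    fun q hq => hφ.contDiffAt (hDopen.mem_nhds hq)
  have hd2val : ∀ x' s' : ℝ, (x', s') ∈ D →
      d2 φ x' s' = fderiv ℝ (fun q : ℝ × ℝ => φ q.1 q.2) (x', s') (0, 1) := by
    intro x' s' hq
    have hdiff := (hΨat (x', s') hq).differentiableAt (by simp)
    have h1 : HasDerivAt (fun t => ((x' : ℝ), t)) ((0 : ℝ), (1 : ℝ)) s' :=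
      (hasDerivAt_const s' x').prodMk (hasDerivAt_id s')
    have h2 : HasDerivAt (fun t => φ x' t)
        (fderiv ℝ (fun q : ℝ × ℝ => φ q.1 q.2) (x', s') (0, 1)) s' :=
      hdiff.hasFDerivAt.comp_hasDerivAt s' h1
    exact h2.deriv
  rintro ⟨x, s⟩ hp
  have hsub := hDsub hp
  simp only [Set.mem_setOf_eq] at hsub
  obtain ⟨hxab, hspos, hslt, hQ0⟩ := hsub
  dsimp only at hxab hspos hslt hQ0 ⊢
  have hu : (0 : ℝ) < x - s ^ 2 := by linarith
  have hrpos : (0 : ℝ) < Real.sqrt (x - s ^ 2) := Real.sqrt_pos.mpr hu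
  have hrne : Real.sqrt (x - s ^ 2) ≠ 0 := ne_of_gt hrpos
  have hrr : Real.sqrt (x - s ^ 2) ^ 2 = x - s ^ 2 := Real.sq_sqrt hu.le
  have hsne : s ≠ 0 := ne_of_gt hspos
  have hΦd : ∀ y : ℝ, HasDerivAt Φ (deriv Φ y) y :=
    fun y => ((hΦ.differentiable one_ne_zero) y).hasDerivAt
  -- derivative of the x-slice of Φ(η)/√(x-s²)
  have hFx := hF x hxab
  have hGx := hG x hxab
  have hE : HasDerivAt (fun t => Real.exp (F t)) (Real.exp (F x) * (f x + x * g x)) x :=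
    hFx.exp
  have hlin : HasDerivAt (fun t : ℝ => t - s ^ 2) 1 x := (hasDerivAt_id x).sub_const (s ^ 2)
  have hQder : HasDerivAt (fun t => Real.exp (F t) - (t - s ^ 2) * G t)
      (Real.exp (F x) * (f x + x * g x) -
        (1 * G x + (x - s ^ 2) * (g x * Real.exp (F x)))) x :=
    hE.sub (hlin.mul hGx)
  have hηx : HasDerivAt (fun t => η t s)
      ((1 * (Real.exp (F x) - (x - s ^ 2) * G x) -
        (x - s ^ 2) * (Real.exp (F x) * (f x + x * g x) -
          (1 * G x + (x - s ^ 2) * (g x * Real.exp (F x))))) /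
        (Real.exp (F x) - (x - s ^ 2) * G x) ^ 2) x := by
    simp only [hη]
    exact hlin.div hQder hQ0
  have hΦηx : HasDerivAt (fun t => Φ (η t s))
      (deriv Φ (η x s) *
        ((1 * (Real.exp (F x) - (x - s ^ 2) * G x) -
        (x - s ^ 2) * (Real.exp (F x) * (f x + x * g x) -
          (1 * G x + (x - s ^ 2) * (g x * Real.exp (F x))))) /
        (Real.exp (F x) - (x - s ^ 2) * G x) ^ 2)) x :=
    HasDerivAt.comp x (hΦd (η x s)) hηx
  have hsqx : HasDerivAt (fun t => Real.sqrt (t - s ^ 2))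
      (1 / (2 * Real.sqrt (x - s ^ 2)) * 1) x :=
    HasDerivAt.comp x (Real.hasDerivAt_sqrt hu.ne') hlin
  have hψx : HasDerivAt (fun t => Φ (η t s) / Real.sqrt (t - s ^ 2))
      ((deriv Φ (η x s) *
        ((1 * (Real.exp (F x) - (x - s ^ 2) * G x) -
        (x - s ^ 2) * (Real.exp (F x) * (f x + x * g x) -
          (1 * G x + (x - s ^ 2) * (g x * Real.exp (F x))))) /
        (Real.exp (F x) - (x - s ^ 2) * G x) ^ 2) * Real.sqrt (x - s ^ 2) -
        Φ (η x s) * (1 / (2 * Real.sqrt (x - s ^ 2)) * 1)) /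
        Real.sqrt (x - s ^ 2) ^ 2) x :=
    hΦηx.div hsqx hrne
  -- derivative of the s-slice of Φ(η)/√(x-s²)
  have hpow : HasDerivAt (fun t : ℝ => t ^ 2) (2 * s) s := by
    simpa using hasDerivAt_pow 2 s
  have hnum_s : HasDerivAt (fun t : ℝ => x - t ^ 2) (-(2 * s)) s := by
    have h := (hasDerivAt_const s x).sub hpow
    exact h.congr_deriv (by ring)
  have hden_s : HasDerivAt (fun t => Real.exp (F x) - (x - t ^ 2) * G x) (2 * s * G x) s := by
    have h := (hasDerivAt_const s (Real.exp (F x))).sub (hnum_s.mul_const (G x))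
    exact h.congr_deriv (by ring)
  have hηs : HasDerivAt (fun t => η x t)
      ((-(2 * s) * (Real.exp (F x) - (x - s ^ 2) * G x) -
        (x - s ^ 2) * (2 * s * G x)) /
        (Real.exp (F x) - (x - s ^ 2) * G x) ^ 2) s := by
    simp only [hη]
    exact hnum_s.div hden_s hQ0
  have hΦηs : HasDerivAt (fun t => Φ (η x t))
      (deriv Φ (η x s) *
        ((-(2 * s) * (Real.exp (F x) - (x - s ^ 2) * G x) -
        (x - s ^ 2) * (2 * s * G x)) /
        (Real.exp (F x) - (x - s ^ 2) * G x) ^ 2)) s :=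
    HasDerivAt.comp s (hΦd (η x s)) hηs
  have hsqs : HasDerivAt (fun t => Real.sqrt (x - t ^ 2))
      (1 / (2 * Real.sqrt (x - s ^ 2)) * (-(2 * s))) s :=
    HasDerivAt.comp s (Real.hasDerivAt_sqrt hu.ne') hnum_s
  have hψs : HasDerivAt (fun t => Φ (η x t) / Real.sqrt (x - t ^ 2))
      ((deriv Φ (η x s) *
        ((-(2 * s) * (Real.exp (F x) - (x - s ^ 2) * G x) -
        (x - s ^ 2) * (2 * s * G x)) /
        (Real.exp (F x) - (x - s ^ 2) * G x) ^ 2) * Real.sqrt (x - s ^ 2) -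
        Φ (η x s) * (1 / (2 * Real.sqrt (x - s ^ 2)) * (-(2 * s)))) /
        Real.sqrt (x - s ^ 2) ^ 2) s :=
    hΦηs.div hsqs hrne
  -- slices of D are neighborhoods
  have hmemD : D ∈ nhds ((x, s) : ℝ × ℝ) := hDopen.mem_nhds hp
  have hx_slice : ∀ᶠ t in nhds x, (t, s) ∈ D :=
    (Continuous.prodMk continuous_id continuous_const).continuousAt.preimage_mem_nhds hmemD
  have hs_slice : ∀ᶠ t in nhds s, (x, t) ∈ D :=
    (Continuous.prodMk continuous_const continuous_id).continuousAt.preimage_mem_nhds hmemD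
  -- φ-side partial derivatives
  have hg2 : ContDiffAt ℝ (⊤ : ℕ∞)
      (fun q : ℝ × ℝ => fderiv ℝ (fun q : ℝ × ℝ => φ q.1 q.2) q (0, 1)) (x, s) :=
    ((hΨat (x, s) hp).fderiv_right (by simp)).clm_apply contDiffAt_const
  have hg2x : HasDerivAt (fun t => fderiv ℝ (fun q : ℝ × ℝ => φ q.1 q.2) (t, s) (0, 1))
      (deriv (fun t => fderiv ℝ (fun q : ℝ × ℝ => φ q.1 q.2) (t, s) (0, 1)) x) x := by
    apply DifferentiableAt.hasDerivAt
    exact (hg2.differentiableAt (by simp)).comp x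
      (differentiableAt_id.prodMk (differentiableAt_const s) : DifferentiableAt ℝ (fun t : ℝ => (t, s)) x)
  have hA2 : HasDerivAt (fun t => d2 φ t s)
      (deriv (fun t => fderiv ℝ (fun q : ℝ × ℝ => φ q.1 q.2) (t, s) (0, 1)) x) x :=
    hg2x.congr_of_eventuallyEq (by filter_upwards [hx_slice] with t ht using hd2val t s ht)
  have hA2' : HasDerivAt (fun t => d2 φ t s) (d1 (d2 φ) x s) x :=
    hA2.differentiableAt.hasDerivAt
  have hg2s : HasDerivAt (fun t => fderiv ℝ (fun q : ℝ × ℝ => φ q.1 q.2) (x, t) (0, 1))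
      (deriv (fun t => fderiv ℝ (fun q : ℝ × ℝ => φ q.1 q.2) (x, t) (0, 1)) s) s := by
    apply DifferentiableAt.hasDerivAt
    exact (hg2.differentiableAt (by simp)).comp s
      ((differentiableAt_const x).prodMk differentiableAt_id)
  have hB2 : HasDerivAt (fun t => d2 φ x t)
      (deriv (fun t => fderiv ℝ (fun q : ℝ × ℝ => φ q.1 q.2) (x, t) (0, 1)) s) s :=
    hg2s.congr_of_eventuallyEq (by filter_upwards [hs_slice] with t ht using hd2val x t ht)
  have hB2' : HasDerivAt (fun t => d2 φ x t) (d2 (d2 φ) x s) s :=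
    hB2.differentiableAt.hasDerivAt
  have hA1' : HasDerivAt (fun t => φ t s) (d1 φ x s) x := by
    apply DifferentiableAt.hasDerivAt
    exact ((hΨat (x, s) hp).differentiableAt (by simp)).comp x
      (differentiableAt_id.prodMk (differentiableAt_const s) : DifferentiableAt ℝ (fun t : ℝ => (t, s)) x)
  have hB1' : HasDerivAt (fun t => φ x t) (d2 φ x s) s := by
    apply DifferentiableAt.hasDerivAt
    exact ((hΨat (x, s) hp).differentiableAt (by simp)).comp s
      ((differentiableAt_const x).prodMk differentiableAt_id)
  -- combine, transfer along the functional equation, and use uniqueness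
  have hAcomb : HasDerivAt (fun t => φ t s - s * d2 φ t s)
      (d1 φ x s - s * d1 (d2 φ) x s) x :=
    hA1'.sub (HasDerivAt.const_mul s hA2')
  have hBcomb : HasDerivAt (fun t => φ x t - t * d2 φ x t)
      (d2 φ x s - (1 * d2 φ x s + s * d2 (d2 φ) x s)) s :=
    hB1'.sub ((hasDerivAt_id s).mul hB2')
  have heqx : (fun t => Φ (η t s) / Real.sqrt (t - s ^ 2)) =ᶠ[nhds x]
      (fun t => φ t s - s * d2 φ t s) := by
    filter_upwards [hx_slice] with t ht using (heq (t, s) ht).symm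
  have heqs : (fun t => Φ (η x t) / Real.sqrt (x - t ^ 2)) =ᶠ[nhds s]
      (fun t => φ x t - t * d2 φ x t) := by
    filter_upwards [hs_slice] with t ht using (heq (x, t) ht).symm
  have hP : d1 φ x s - s * d1 (d2 φ) x s =
      (deriv Φ (η x s) *
        ((1 * (Real.exp (F x) - (x - s ^ 2) * G x) -
        (x - s ^ 2) * (Real.exp (F x) * (f x + x * g x) -
          (1 * G x + (x - s ^ 2) * (g x * Real.exp (F x))))) /
        (Real.exp (F x) - (x - s ^ 2) * G x) ^ 2) * Real.sqrt (x - s ^ 2) -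
        Φ (η x s) * (1 / (2 * Real.sqrt (x - s ^ 2)) * 1)) /
        Real.sqrt (x - s ^ 2) ^ 2 :=
    (hAcomb.congr_of_eventuallyEq heqx).unique hψx
  have hSeq : d2 φ x s - (1 * d2 φ x s + s * d2 (d2 φ) x s) =
      (deriv Φ (η x s) *
        ((-(2 * s) * (Real.exp (F x) - (x - s ^ 2) * G x) -
        (x - s ^ 2) * (2 * s * G x)) /
        (Real.exp (F x) - (x - s ^ 2) * G x) ^ 2) * Real.sqrt (x - s ^ 2) -
        Φ (η x s) * (1 / (2 * Real.sqrt (x - s ^ 2)) * (-(2 * s)))) /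
        Real.sqrt (x - s ^ 2) ^ 2 :=
    (hBcomb.congr_of_eventuallyEq heqs).unique hψs
  have hc4 : s * d2 (d2 φ) x s =
      -((deriv Φ (η x s) *
        ((-(2 * s) * (Real.exp (F x) - (x - s ^ 2) * G x) -
        (x - s ^ 2) * (2 * s * G x)) /
        (Real.exp (F x) - (x - s ^ 2) * G x) ^ 2) * Real.sqrt (x - s ^ 2) -
        Φ (η x s) * (1 / (2 * Real.sqrt (x - s ^ 2)) * (-(2 * s)))) /
        Real.sqrt (x - s ^ 2) ^ 2) := by linear_combination -hSeq
  have hval : φ x s - s * d2 φ x s = Φ (η x s) / Real.sqrt (x - s ^ 2) := heq (x, s) hp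
  rw [hP, hval]
  exact alg_key (f x) (g x) (Real.exp (F x)) (G x) (Φ (η x s)) (deriv Φ (η x s)) x s
    (Real.sqrt (x - s ^ 2)) (d2 (d2 φ) x s) hrne hsne hQ0 hrr hc4
end

section
/- Let I ⊆ ℝ be an open interval, f, g : I → ℝ continuous, E(x) := e^{F(x)} where F is an antiderivative of x ↦ f(x)+x·g(x), G an antiderivative of x ↦ g(x)E(x), and η(x,s) := (x−s²)/(E(x) − (x−s²)G(x)). Let Φ : ℝ → ℝ be continuously differentiable, h : I → ℝ smooth, and suppose Ψ is a smooth function of (x,s) on a domain contained in {(x,s) : x ∈ I, 0 < s, s² < x, E(x) − (x−s²)G(x) ≠ 0} satisfying ∂₂Ψ(x,s) = Φ(η(x,s))/(s²·√(x − s²)). Define φ(x,s) := s·(h(x) − Ψ(x,s)). Then φ − s·∂₂φ = Φ(η)/√(x−s²) on the domain, and consequently φ satisfies the Douglas PDE: ∂₂₂φ − 2(∂₁φ − s·∂₁₂φ) = (f(x)+g(x)s²)·(φ − s·∂₂φ + (x−s²)·∂₂₂φ). -/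
open Set

/-- if Ψ₂ = Φ(η)/(s²√(x−s²)) and φ = s(h(x) − Ψ(x,s)), then
φ − sφ₂ = Φ(η)/√(x−s²) and φ satisfies the Douglas PDE. -/
theorem stmt_6 (a b : ℝ) (f g F G : ℝ → ℝ)
    (hf : ContinuousOn f (Ioo a b)) (hg : ContinuousOn g (Ioo a b))
    (hF : ∀ x ∈ Ioo a b, HasDerivAt F (f x + x * g x) x)
    (hG : ∀ x ∈ Ioo a b, HasDerivAt G (g x * Real.exp (F x)) x)
    (η : ℝ → ℝ → ℝ)
    (hη : ∀ x s : ℝ, η x s = (x - s ^ 2) / (Real.exp (F x) - (x - s ^ 2) * G x))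
    (Φ : ℝ → ℝ) (hΦ : ContDiff ℝ 1 Φ)
    (h : ℝ → ℝ) (hh : ContDiffOn ℝ (⊤ : ℕ∞) h (Ioo a b))
    (D : Set (ℝ × ℝ)) (hDopen : IsOpen D)
    (hDsub : D ⊆ {p : ℝ × ℝ | p.1 ∈ Ioo a b ∧ 0 < p.2 ∧ p.2 ^ 2 < p.1 ∧
      Real.exp (F p.1) - (p.1 - p.2 ^ 2) * G p.1 ≠ 0})
    (Ψ : ℝ → ℝ → ℝ) (hΨ : ContDiffOn ℝ (⊤ : ℕ∞) (fun p : ℝ × ℝ => Ψ p.1 p.2) D)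
    (hΨ2 : ∀ p ∈ D, d2 Ψ p.1 p.2 =
      Φ (η p.1 p.2) / (p.2 ^ 2 * Real.sqrt (p.1 - p.2 ^ 2)))
    (φ : ℝ → ℝ → ℝ) (hφdef : ∀ x s : ℝ, φ x s = s * (h x - Ψ x s)) :
    ∀ p ∈ D, (φ p.1 p.2 - p.2 * d2 φ p.1 p.2 =
        Φ (η p.1 p.2) / Real.sqrt (p.1 - p.2 ^ 2)) ∧
      (d2 (d2 φ) p.1 p.2 - 2 * (d1 φ p.1 p.2 - p.2 * d1 (d2 φ) p.1 p.2) =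
        (f p.1 + g p.1 * p.2 ^ 2) *
          (φ p.1 p.2 - p.2 * d2 φ p.1 p.2 + (p.1 - p.2 ^ 2) * d2 (d2 φ) p.1 p.2)) := by
  have hΦd : ∀ y : ℝ, HasDerivAt Φ (deriv Φ y) y := fun y =>
    ((hΦ.differentiable one_ne_zero) y).hasDerivAt
  have hΨdiff : ∀ p ∈ D, DifferentiableAt ℝ (fun q : ℝ × ℝ => Ψ q.1 q.2) p := fun p hp =>
    ((hΨ.differentiableOn (by simp)) p hp).differentiableAt (hDopen.mem_nhds hp)
  have hslice2 : ∀ x s : ℝ, (x, s) ∈ D → DifferentiableAt ℝ (fun t => Ψ x t) s := by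
    intro x s hp
    have := (hΨdiff (x, s) hp).comp s
      ((differentiableAt_const x).prodMk (differentiableAt_id : DifferentiableAt ℝ id s))
    exact this
  have hslice1 : ∀ x s : ℝ, (x, s) ∈ D → DifferentiableAt ℝ (fun t => Ψ t s) x := by
    intro x s hp
    have := (hΨdiff (x, s) hp).comp x
      ((differentiableAt_id : DifferentiableAt ℝ id x).prodMk (differentiableAt_const s))
    exact this
  -- derivative of φ in second variable
  have hφslice2 : ∀ x s : ℝ, (x, s) ∈ D →
      HasDerivAt (fun t => φ x t) (h x - Ψ x s - s * d2 Ψ x s) s := by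
    intro x s hp
    have hΨs : HasDerivAt (fun t => Ψ x t) (d2 Ψ x s) s := (hslice2 x s hp).hasDerivAt
    have H : HasDerivAt (fun t => t * (h x - Ψ x t))
        (1 * (h x - Ψ x s) + s * (0 - d2 Ψ x s)) s :=
      (hasDerivAt_id s).mul ((hasDerivAt_const s (h x)).sub hΨs)
    have heq : (fun t => φ x t) = fun t => t * (h x - Ψ x t) := funext fun t => hφdef x t
    rw [heq]
    convert H using 1
    ring
  -- Part 1, as a statement for all points of D
  have key : ∀ x s : ℝ, (x, s) ∈ D →
      φ x s - s * d2 φ x s = Φ (η x s) / Real.sqrt (x - s ^ 2) := by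
    intro x s hp
    have hs0 : 0 < s := (hDsub hp).2.1
    have hsx : s ^ 2 < x := (hDsub hp).2.2.1
    have hu : 0 < x - s ^ 2 := by linarith
    have hr : 0 < Real.sqrt (x - s ^ 2) := Real.sqrt_pos.2 hu
    have hd2 : d2 φ x s = h x - Ψ x s - s * d2 Ψ x s := (hφslice2 x s hp).deriv
    have hΨ2' : d2 Ψ x s = Φ (η x s) / (s ^ 2 * Real.sqrt (x - s ^ 2)) := hΨ2 (x, s) hp
    rw [hφdef, hd2, hΨ2']
    field_simp
    ring
  intro p hp
  obtain ⟨x, s⟩ := p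
  have hx : x ∈ Ioo a b := (hDsub hp).1
  have hs0 : 0 < s := (hDsub hp).2.1
  have hsx : s ^ 2 < x := (hDsub hp).2.2.1
  have hW : Real.exp (F x) - (x - s ^ 2) * G x ≠ 0 := (hDsub hp).2.2.2
  have hsne : s ≠ 0 := ne_of_gt hs0
  have hu : 0 < x - s ^ 2 := by linarith
  have hune : x - s ^ 2 ≠ 0 := ne_of_gt hu
  have hrpos : 0 < Real.sqrt (x - s ^ 2) := Real.sqrt_pos.2 hu
  have hrne : Real.sqrt (x - s ^ 2) ≠ 0 := ne_of_gt hrpos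
  refine ⟨key x s hp, ?_⟩
  ---- s-direction derivative of K := Φ(η x ·)/√(x − ·²)
  have hnum_s : HasDerivAt (fun t : ℝ => x - t ^ 2) (-(2 * s)) s := by
    simpa using (hasDerivAt_pow 2 s).const_sub x
  have hden_s : HasDerivAt (fun t : ℝ => Real.exp (F x) - (x - t ^ 2) * G x)
      (0 - -(2 * s) * G x) s :=
    (hasDerivAt_const s (Real.exp (F x))).sub (hnum_s.mul_const (G x))
  have hηfun_s : (fun t => η x t)
      = fun t => (x - t ^ 2) / (Real.exp (F x) - (x - t ^ 2) * G x) :=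
    funext fun t => hη x t
  have hηs : HasDerivAt (fun t => η x t)
      ((-(2 * s) * (Real.exp (F x) - (x - s ^ 2) * G x)
        - (x - s ^ 2) * (0 - -(2 * s) * G x))
        / (Real.exp (F x) - (x - s ^ 2) * G x) ^ 2) s := by
    rw [hηfun_s]
    exact hnum_s.div hden_s hW
  have hΦηs : HasDerivAt (fun t => Φ (η x t))
      (deriv Φ (η x s) *
        ((-(2 * s) * (Real.exp (F x) - (x - s ^ 2) * G x)
          - (x - s ^ 2) * (0 - -(2 * s) * G x))
          / (Real.exp (F x) - (x - s ^ 2) * G x) ^ 2)) s :=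
    (hΦd (η x s)).comp s hηs
  have hsq_s : HasDerivAt (fun t : ℝ => Real.sqrt (x - t ^ 2))
      (1 / (2 * Real.sqrt (x - s ^ 2)) * -(2 * s)) s :=
    (Real.hasDerivAt_sqrt hune).comp s hnum_s
  have hKs : HasDerivAt (fun t => Φ (η x t) / Real.sqrt (x - t ^ 2))
      ((deriv Φ (η x s) *
          ((-(2 * s) * (Real.exp (F x) - (x - s ^ 2) * G x)
            - (x - s ^ 2) * (0 - -(2 * s) * G x))
            / (Real.exp (F x) - (x - s ^ 2) * G x) ^ 2) * Real.sqrt (x - s ^ 2)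
        - Φ (η x s) * (1 / (2 * Real.sqrt (x - s ^ 2)) * -(2 * s)))
        / Real.sqrt (x - s ^ 2) ^ 2) s :=
    hΦηs.div hsq_s hrne
  ---- x-direction derivative of K
  have hnum_x : HasDerivAt (fun t : ℝ => t - s ^ 2) 1 x := (hasDerivAt_id x).sub_const _
  have hden_x : HasDerivAt (fun t : ℝ => Real.exp (F t) - (t - s ^ 2) * G t)
      (Real.exp (F x) * (f x + x * g x)
        - (1 * G x + (x - s ^ 2) * (g x * Real.exp (F x)))) x :=
    ((hF x hx).exp).sub (hnum_x.mul (hG x hx))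
  have hηfun_x : (fun t => η t s)
      = fun t => (t - s ^ 2) / (Real.exp (F t) - (t - s ^ 2) * G t) :=
    funext fun t => hη t s
  have hηx : HasDerivAt (fun t => η t s)
      ((1 * (Real.exp (F x) - (x - s ^ 2) * G x)
        - (x - s ^ 2) * (Real.exp (F x) * (f x + x * g x)
          - (1 * G x + (x - s ^ 2) * (g x * Real.exp (F x)))))
        / (Real.exp (F x) - (x - s ^ 2) * G x) ^ 2) x := by
    rw [hηfun_x]
    exact hnum_x.div hden_x hW
  have hΦηx : HasDerivAt (fun t => Φ (η t s))
      (deriv Φ (η x s) *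
        ((1 * (Real.exp (F x) - (x - s ^ 2) * G x)
          - (x - s ^ 2) * (Real.exp (F x) * (f x + x * g x)
            - (1 * G x + (x - s ^ 2) * (g x * Real.exp (F x)))))
          / (Real.exp (F x) - (x - s ^ 2) * G x) ^ 2)) x :=
    (hΦd (η x s)).comp x hηx
  have hsq_x : HasDerivAt (fun t : ℝ => Real.sqrt (t - s ^ 2))
      (1 / (2 * Real.sqrt (x - s ^ 2)) * 1) x :=
    (Real.hasDerivAt_sqrt hune).comp x hnum_x
  have hKx : HasDerivAt (fun t => Φ (η t s) / Real.sqrt (t - s ^ 2))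
      ((deriv Φ (η x s) *
          ((1 * (Real.exp (F x) - (x - s ^ 2) * G x)
            - (x - s ^ 2) * (Real.exp (F x) * (f x + x * g x)
              - (1 * G x + (x - s ^ 2) * (g x * Real.exp (F x)))))
            / (Real.exp (F x) - (x - s ^ 2) * G x) ^ 2) * Real.sqrt (x - s ^ 2)
        - Φ (η x s) * (1 / (2 * Real.sqrt (x - s ^ 2)) * 1))
        / Real.sqrt (x - s ^ 2) ^ 2) x :=
    hΦηx.div hsq_x hrne
  ---- second derivative in s
  have hφs : HasDerivAt (fun t => φ x t) (d2 φ x s) s :=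
    (hφslice2 x s hp).differentiableAt.hasDerivAt
  have hmem_s : ∀ᶠ t in nhds s, (x, t) ∈ D :=
    ((continuous_const.prodMk continuous_id).continuousAt).preimage_mem_nhds
      (hDopen.mem_nhds hp)
  have hIeq_s : (fun t => t * d2 φ x t)
      =ᶠ[nhds s] fun t => φ x t - Φ (η x t) / Real.sqrt (x - t ^ 2) := by
    filter_upwards [hmem_s] with t ht
    have := key x t ht
    linarith
  have h1s : HasDerivAt (fun t => t * d2 φ x t)
      (d2 φ x s - (deriv Φ (η x s) *
          ((-(2 * s) * (Real.exp (F x) - (x - s ^ 2) * G x)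
            - (x - s ^ 2) * (0 - -(2 * s) * G x))
            / (Real.exp (F x) - (x - s ^ 2) * G x) ^ 2) * Real.sqrt (x - s ^ 2)
        - Φ (η x s) * (1 / (2 * Real.sqrt (x - s ^ 2)) * -(2 * s)))
        / Real.sqrt (x - s ^ 2) ^ 2) s :=
    (hφs.sub hKs).congr_of_eventuallyEq hIeq_s
  have h2eq : (fun t => d2 φ x t) =ᶠ[nhds s] fun t => t⁻¹ * (t * d2 φ x t) := by
    filter_upwards [Ioi_mem_nhds hs0] with t ht
    rw [inv_mul_cancel_left₀ (ne_of_gt ht)]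
  have h2s : HasDerivAt (fun t => d2 φ x t)
      (-(s ^ 2)⁻¹ * (s * d2 φ x s) + s⁻¹ *
        (d2 φ x s - (deriv Φ (η x s) *
          ((-(2 * s) * (Real.exp (F x) - (x - s ^ 2) * G x)
            - (x - s ^ 2) * (0 - -(2 * s) * G x))
            / (Real.exp (F x) - (x - s ^ 2) * G x) ^ 2) * Real.sqrt (x - s ^ 2)
        - Φ (η x s) * (1 / (2 * Real.sqrt (x - s ^ 2)) * -(2 * s)))
        / Real.sqrt (x - s ^ 2) ^ 2)) s :=
    ((hasDerivAt_inv hsne).mul h1s).congr_of_eventuallyEq h2eq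
  have hdd2 : d2 (d2 φ) x s
      = -(s ^ 2)⁻¹ * (s * d2 φ x s) + s⁻¹ *
        (d2 φ x s - (deriv Φ (η x s) *
          ((-(2 * s) * (Real.exp (F x) - (x - s ^ 2) * G x)
            - (x - s ^ 2) * (0 - -(2 * s) * G x))
            / (Real.exp (F x) - (x - s ^ 2) * G x) ^ 2) * Real.sqrt (x - s ^ 2)
        - Φ (η x s) * (1 / (2 * Real.sqrt (x - s ^ 2)) * -(2 * s)))
        / Real.sqrt (x - s ^ 2) ^ 2) := h2s.deriv
  ---- mixed derivative
  have hhx : HasDerivAt h (deriv h x) x :=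
    (((hh.differentiableOn (by simp)) x hx).differentiableAt (isOpen_Ioo.mem_nhds hx)).hasDerivAt
  have hΨx : HasDerivAt (fun t => Ψ t s) (d1 Ψ x s) x := (hslice1 x s hp).hasDerivAt
  have hφx : HasDerivAt (fun t => φ t s) (d1 φ x s) x := by
    have heq : (fun t => φ t s) = fun t => s * (h t - Ψ t s) := funext fun t => hφdef t s
    have H : HasDerivAt (fun t => s * (h t - Ψ t s)) (s * (deriv h x - d1 Ψ x s)) x :=
      (hhx.sub hΨx).const_mul s
    have : HasDerivAt (fun t => φ t s) (s * (deriv h x - d1 Ψ x s)) x := by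
      rw [heq]; exact H
    exact this.differentiableAt.hasDerivAt
  have hmem_x : ∀ᶠ t in nhds x, (t, s) ∈ D :=
    ((continuous_id.prodMk continuous_const).continuousAt).preimage_mem_nhds
      (hDopen.mem_nhds hp)
  have hIeq_x : (fun t => s * d2 φ t s)
      =ᶠ[nhds x] fun t => φ t s - Φ (η t s) / Real.sqrt (t - s ^ 2) := by
    filter_upwards [hmem_x] with t ht
    have := key t s ht
    linarith
  have h1x : HasDerivAt (fun t => s * d2 φ t s)
      (d1 φ x s - (deriv Φ (η x s) *
          ((1 * (Real.exp (F x) - (x - s ^ 2) * G x)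
            - (x - s ^ 2) * (Real.exp (F x) * (f x + x * g x)
              - (1 * G x + (x - s ^ 2) * (g x * Real.exp (F x)))))
            / (Real.exp (F x) - (x - s ^ 2) * G x) ^ 2) * Real.sqrt (x - s ^ 2)
        - Φ (η x s) * (1 / (2 * Real.sqrt (x - s ^ 2)) * 1))
        / Real.sqrt (x - s ^ 2) ^ 2) x :=
    (hφx.sub hKx).congr_of_eventuallyEq hIeq_x
  have h2x : HasDerivAt (fun t => d2 φ t s)
      (s⁻¹ * (d1 φ x s - (deriv Φ (η x s) *
          ((1 * (Real.exp (F x) - (x - s ^ 2) * G x)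
            - (x - s ^ 2) * (Real.exp (F x) * (f x + x * g x)
              - (1 * G x + (x - s ^ 2) * (g x * Real.exp (F x)))))
            / (Real.exp (F x) - (x - s ^ 2) * G x) ^ 2) * Real.sqrt (x - s ^ 2)
        - Φ (η x s) * (1 / (2 * Real.sqrt (x - s ^ 2)) * 1))
        / Real.sqrt (x - s ^ 2) ^ 2)) x := by
    have heq2 : (fun t => d2 φ t s) = fun t => s⁻¹ * (s * d2 φ t s) :=
      funext fun t => (inv_mul_cancel_left₀ hsne _).symm
    rw [heq2]
    exact h1x.const_mul s⁻¹
  have hd12 : d1 (d2 φ) x s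
      = s⁻¹ * (d1 φ x s - (deriv Φ (η x s) *
          ((1 * (Real.exp (F x) - (x - s ^ 2) * G x)
            - (x - s ^ 2) * (Real.exp (F x) * (f x + x * g x)
              - (1 * G x + (x - s ^ 2) * (g x * Real.exp (F x)))))
            / (Real.exp (F x) - (x - s ^ 2) * G x) ^ 2) * Real.sqrt (x - s ^ 2)
        - Φ (η x s) * (1 / (2 * Real.sqrt (x - s ^ 2)) * 1))
        / Real.sqrt (x - s ^ 2) ^ 2) := h2x.deriv
  ---- final algebra
  have hR2 : Real.sqrt (x - s ^ 2) ^ 2 = x - s ^ 2 := Real.sq_sqrt hu.le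
  show d2 (d2 φ) x s - 2 * (d1 φ x s - s * d1 (d2 φ) x s) =
      (f x + g x * s ^ 2) *
        (φ x s - s * d2 φ x s + (x - s ^ 2) * d2 (d2 φ) x s)
  rw [hdd2, hd12, key x s hp]
  generalize hB : deriv Φ (η x s) = B
  generalize hA : Φ (η x s) = A
  generalize hD1 : d1 φ x s = D1
  generalize hD2 : d2 φ x s = D2
  generalize hfv : f x = fv
  generalize hgv : g x = gv
  generalize hGv : G x = Gv
  generalize hEv : Real.exp (F x) = Ev
  generalize hRg : Real.sqrt (x - s ^ 2) = R
  have hR2' : R ^ 2 = x - s ^ 2 := by rw [← hRg]; exact hR2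
  have hRne : R ≠ 0 := by rw [← hRg]; exact hrne
  have hWne : Ev - (x - s ^ 2) * Gv ≠ 0 := by rw [← hEv, ← hGv]; exact hW
  rw [← hR2'] at hWne ⊢
  have hx2 : x = R ^ 2 + s ^ 2 := by linarith [hR2']
  rw [hx2]
  field_simp
  ring
end

section
/- Let φ be a smooth real function of two variables (x,s) on a domain contained in {(x,s) : 0 < s and s² < x}, and define ψ(x,s) := (φ(x,s) − s·∂₂φ(x,s))·√(x − s²). Then at every point (x,s) of the domain, the two conditions [φ − s·∂₂φ > 0 and φ − s·∂₂φ + (x − s²)·∂₂₂φ > 0] hold if and only if the two conditions [ψ/√(x − s²) > 0 and −(√(x − s²)/s)·∂₂ψ > 0] hold. -/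
open Set

/-- with ψ = (φ − sφ₂)√(x−s²) on a domain inside {0 < s, s² < x},
the Finsler regularity conditions [φ − sφ₂ > 0 and φ − sφ₂ + (x−s²)φ₂₂ > 0] hold
iff [ψ/√(x−s²) > 0 and −(√(x−s²)/s)·ψ₂ > 0]. -/
theorem stmt_10 (D : Set (ℝ × ℝ)) (hDopen : IsOpen D)
    (hDsub : D ⊆ {p : ℝ × ℝ | 0 < p.2 ∧ p.2 ^ 2 < p.1})
    (φ : ℝ → ℝ → ℝ) (hφ : ContDiffOn ℝ (⊤ : ℕ∞) (fun p : ℝ × ℝ => φ p.1 p.2) D)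
    (ψ : ℝ → ℝ → ℝ)
    (hψ : ∀ x s : ℝ, ψ x s = (φ x s - s * d2 φ x s) * Real.sqrt (x - s ^ 2)) :
    ∀ p ∈ D,
      ((0 < φ p.1 p.2 - p.2 * d2 φ p.1 p.2 ∧
        0 < φ p.1 p.2 - p.2 * d2 φ p.1 p.2 + (p.1 - p.2 ^ 2) * d2 (d2 φ) p.1 p.2) ↔
      (0 < ψ p.1 p.2 / Real.sqrt (p.1 - p.2 ^ 2) ∧
        0 < -(Real.sqrt (p.1 - p.2 ^ 2) / p.2) * d2 ψ p.1 p.2)) := by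
  intro p hp
  obtain ⟨x, s⟩ := p
  have hs : 0 < s := (hDsub hp).1
  have hxs : s ^ 2 < x := (hDsub hp).2
  have hpos : (0:ℝ) < x - s ^ 2 := by linarith
  have hr : 0 < Real.sqrt (x - s ^ 2) := Real.sqrt_pos.mpr hpos
  set r := Real.sqrt (x - s ^ 2) with hrdef
  set f : ℝ × ℝ → ℝ := fun q => φ q.1 q.2 with hfdef
  have hfdiff : ∀ q ∈ D, DifferentiableAt ℝ f q := fun q hq =>
    (hφ.contDiffAt (hDopen.mem_nhds hq)).differentiableAt (by simp)
  have key : ∀ z t : ℝ, (z, t) ∈ D →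
      HasDerivAt (fun u => φ z u) (fderiv ℝ f (z, t) ((0:ℝ), (1:ℝ))) t := by
    intro z t hq
    have hline : HasDerivAt (fun u : ℝ => ((z, u) : ℝ × ℝ)) ((0:ℝ), (1:ℝ)) t :=
      (hasDerivAt_const _ _).prodMk (hasDerivAt_id _)
    have := ((hfdiff (z, t) hq).hasFDerivAt).comp_hasDerivAt t hline
    simpa [Function.comp_def] using this
  have hd2eq : ∀ z t : ℝ, (z, t) ∈ D →
      d2 φ z t = fderiv ℝ f (z, t) ((0:ℝ), (1:ℝ)) := fun z t hq => (key z t hq).deriv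
  -- second partial
  set F : ℝ × ℝ → ℝ := fun q => fderiv ℝ f q ((0:ℝ), (1:ℝ)) with hFdef
  have hFcd : ContDiffOn ℝ (⊤ : ℕ∞) F D := by
    have h1 : ContDiffOn ℝ (⊤ : ℕ∞) (fun q => fderiv ℝ f q) D :=
      hφ.fderiv_of_isOpen hDopen (by simp)
    exact ((ContinuousLinearMap.apply ℝ ℝ (((0:ℝ), (1:ℝ)) : ℝ × ℝ)).contDiff).comp_contDiffOn h1
  have hFdiff : DifferentiableAt ℝ F (x, s) :=
    (hFcd.contDiffAt (hDopen.mem_nhds hp)).differentiableAt (by simp)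
  have hline : HasDerivAt (fun t : ℝ => ((x, t) : ℝ × ℝ)) ((0:ℝ), (1:ℝ)) s :=
    (hasDerivAt_const _ _).prodMk (hasDerivAt_id _)
  have hFline : HasDerivAt (fun t => F (x, t)) (fderiv ℝ F (x, s) ((0:ℝ), (1:ℝ))) s := by
    have := hFdiff.hasFDerivAt.comp_hasDerivAt s hline
    simpa [Function.comp_def] using this
  have hnbhd : ∀ᶠ t in nhds s, (x, t) ∈ D := by
    have hc : ContinuousAt (fun t : ℝ => ((x, t) : ℝ × ℝ)) s := by fun_prop
    exact hc (hDopen.mem_nhds hp)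
  have heq : (fun t => d2 φ x t) =ᶠ[nhds s] fun t => F (x, t) :=
    hnbhd.mono fun t ht => hd2eq x t ht
  have hB0 : HasDerivAt (fun t => d2 φ x t) (fderiv ℝ F (x, s) ((0:ℝ), (1:ℝ))) s :=
    hFline.congr_of_eventuallyEq heq
  have hB : HasDerivAt (fun t => d2 φ x t) (d2 (d2 φ) x s) s := by
    rw [show d2 (d2 φ) x s = fderiv ℝ F (x, s) ((0:ℝ), (1:ℝ)) from hB0.deriv]
    exact hB0
  have hA : HasDerivAt (fun t => φ x t) (d2 φ x s) s := by
    rw [show d2 φ x s = fderiv ℝ f (x, s) ((0:ℝ), (1:ℝ)) from hd2eq x s hp]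
    exact key x s hp
  -- sqrt part
  have hinner : HasDerivAt (fun t : ℝ => x - t ^ 2) (-(2 * s)) s := by
    simpa using (hasDerivAt_pow 2 s).const_sub x
  have hsq : HasDerivAt (fun t : ℝ => Real.sqrt (x - t ^ 2)) (1 / (2 * r) * (-(2 * s))) s := by
    have := (Real.hasDerivAt_sqrt hpos.ne').comp s hinner
    simpa [Function.comp_def, hrdef] using this
  have hts : HasDerivAt (fun t => t * d2 φ x t)
      (1 * d2 φ x s + s * d2 (d2 φ) x s) s := (hasDerivAt_id s).mul hB
  have hsub : HasDerivAt (fun t => φ x t - t * d2 φ x t)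
      (d2 φ x s - (1 * d2 φ x s + s * d2 (d2 φ) x s)) s := hA.sub hts
  have hψd : HasDerivAt (fun t => ψ x t)
      ((d2 φ x s - (1 * d2 φ x s + s * d2 (d2 φ) x s)) * r +
        (φ x s - s * d2 φ x s) * (1 / (2 * r) * (-(2 * s)))) s := by
    have h := hsub.mul hsq
    have hfun : (fun t => ψ x t) =
        fun t => (φ x t - t * d2 φ x t) * Real.sqrt (x - t ^ 2) := by
      funext t; exact hψ x t
    rw [hfun]
    exact h
  have hd2ψ : d2 ψ x s =
      (d2 φ x s - (1 * d2 φ x s + s * d2 (d2 φ) x s)) * r +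
        (φ x s - s * d2 φ x s) * (1 / (2 * r) * (-(2 * s))) := hψd.deriv
  have hr2 : r ^ 2 = x - s ^ 2 := Real.sq_sqrt hpos.le
  have h1 : ψ x s / r = φ x s - s * d2 φ x s := by
    rw [hψ, ← hrdef]
    field_simp
  have h2 : -(r / s) * d2 ψ x s =
      φ x s - s * d2 φ x s + (x - s ^ 2) * d2 (d2 φ) x s := by
    rw [hd2ψ, ← hr2]
    field_simp
    ring
  show _ ↔ 0 < ψ x s / r ∧ 0 < -(r / s) * d2 ψ x s
  rw [h1, h2]
end

section
/- Fix b > 0 and an integer m ≥ 1, and adopt the double-factorial convention (−1)!! = 0!! = 1. Define F : (0,b) → ℝ by F(s) := [(2m−1)!!/(2m−2)!!]·(1/s)·Σ_{i=1}^{m−1} [(2m−2−2i)!!/(2m−2i+1)!!]·(b²)^{i−1}·(b²−s²)^{(2m−2i+1)/2} − [(2m−1)!!/(2m−2)!!]·(1/s)·(b²)^{m−1}·[(b²−s²)^{1/2} + s·arctan(s/√(b²−s²))] (the sum being empty when m = 1). Then for every s ∈ (0,b): F'(s) = s^{−2}·(b² − s²)^{(2m−1)/2}. -/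
/-!
Write `u = b² − s²`. For `p = m + 1/2` one has
`d/ds (u^p / s) = ((2p − 1) u^p − 2p b² u^(p−1)) / s²`, because `s² u^(p−1) = b² u^(p−1) − u^p`.
Hence antiderivatives `F_m` of `u^(m−1/2) / s²` obey the reduction formula
`F_(m+1) = (2m+1)/(2m) · b² F_m + u^(m+1/2) / (2m s)`, and the double-factorial coefficients of
the closed form are exactly those produced by unrolling it. The recursion starts from
`F_1 = −(√u + s · arctan (s / √u)) / s`, whose bracket has derivative `arctan (s / √u)`.
-/

open Set

/-- Double factorial with the convention `0!! = 1` (and, via ℕ-truncation of the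
argument, `(−1)!! = dfac 0 = 1`). -/
def dfac : ℕ → ℕ
  | 0 => 1
  | 1 => 1
  | n + 2 => (n + 2) * dfac n

open Finset Real

lemma dfac_add_two (n : ℕ) : dfac (n + 2) = (n + 2) * dfac n := rfl

lemma dfac_pos : ∀ n, 0 < dfac n
  | 0 => one_pos
  | 1 => one_pos
  | n + 2 => Nat.mul_pos (by omega) (dfac_pos n)

lemma dfac_cast_ne_zero (n : ℕ) : (dfac n : ℝ) ≠ 0 := by
  exact_mod_cast (dfac_pos n).ne'

lemma sum_Icc_one_add_one {M : Type*} [AddCommMonoid M] (f : ℕ → M) (n : ℕ) :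
    ∑ i ∈ Icc 1 (n + 1), f i = f 1 + ∑ i ∈ Icc 1 n, f (i + 1) := by
  rw [Icc_eq_cons_Ioc (by omega), sum_cons, ← Finset.Icc_add_one_left_eq_Ioc,
    ← map_add_right_Icc, sum_map]
  rfl

noncomputable def dfacRatio (m : ℕ) : ℝ := (dfac (2 * m - 1) : ℝ) / dfac (2 * m - 2)

noncomputable def evenTerm (b : ℝ) (m i : ℕ) (s : ℝ) : ℝ :=
  ((dfac (2 * m - 2 - 2 * i) : ℝ) / (dfac (2 * m - 2 * i + 1))) * (b ^ 2) ^ (i - 1) *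
    (b ^ 2 - s ^ 2) ^ ((2 * (m : ℝ) - 2 * (i : ℝ) + 1) / 2)

noncomputable def evenSum (b : ℝ) (m : ℕ) (s : ℝ) : ℝ :=
  ∑ i ∈ Icc 1 (m - 1), evenTerm b m i s

noncomputable def arctanPart (b s : ℝ) : ℝ :=
  √(b ^ 2 - s ^ 2) + s * arctan (s / √(b ^ 2 - s ^ 2))

noncomputable def evenAntideriv (b : ℝ) (m : ℕ) (s : ℝ) : ℝ :=
  dfacRatio m * (1 / s) * evenSum b m s -
    dfacRatio m * (1 / s) * (b ^ 2) ^ (m - 1) * arctanPart b s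

lemma dfacRatio_one : dfacRatio 1 = 1 := by norm_num [dfacRatio, dfac]

lemma dfacRatio_add_two (k : ℕ) :
    dfacRatio (k + 2) = (2 * k + 3) / (2 * k + 2) * dfacRatio (k + 1) := by
  simp only [dfacRatio, show 2 * (k + 2) - 1 = 2 * k + 1 + 2 by omega,
    show 2 * (k + 2) - 2 = 2 * k + 2 by omega, show 2 * (k + 1) - 1 = 2 * k + 1 by omega,
    show 2 * (k + 1) - 2 = 2 * k by omega, dfac_add_two]
  have := dfac_cast_ne_zero (2 * k)
  push_cast
  field_simp
  ring

lemma dfacRatio_add_two_mul (k : ℕ) :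
    dfacRatio (k + 2) * ((dfac (2 * k) : ℝ) / dfac (2 * k + 3)) = 1 / (2 * k + 2) := by
  simp only [dfacRatio, show 2 * (k + 2) - 1 = 2 * k + 3 by omega,
    show 2 * (k + 2) - 2 = 2 * k + 2 by omega, dfac_add_two]
  have := dfac_cast_ne_zero (2 * k)
  have := dfac_cast_ne_zero (2 * k + 1)
  have := dfac_cast_ne_zero (2 * k + 3)
  push_cast
  field_simp

lemma evenTerm_add_one_add_one (b s : ℝ) (m : ℕ) {i : ℕ} (hi : 1 ≤ i) :
    evenTerm b (m + 1) (i + 1) s = b ^ 2 * evenTerm b m i s := by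
  obtain ⟨j, rfl⟩ : ∃ j, i = j + 1 := ⟨i - 1, by omega⟩
  simp only [evenTerm,
    show 2 * (m + 1) - 2 - 2 * (j + 1 + 1) = 2 * m - 2 - 2 * (j + 1) by omega,
    show 2 * (m + 1) - 2 * (j + 1 + 1) + 1 = 2 * m - 2 * (j + 1) + 1 by omega,
    Nat.add_sub_cancel, pow_succ]
  push_cast
  ring_nf

lemma evenTerm_one (b s : ℝ) (k : ℕ) :
    evenTerm b (k + 2) 1 s = (dfac (2 * k) : ℝ) / dfac (2 * k + 3) *
      (b ^ 2 - s ^ 2) ^ ((2 * (k : ℝ) + 3) / 2) := by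
  simp only [evenTerm, show 2 * (k + 2) - 2 - 2 * 1 = 2 * k by omega,
    show 2 * (k + 2) - 2 * 1 + 1 = 2 * k + 3 by omega]
  push_cast
  ring_nf

lemma evenSum_add_two (b s : ℝ) (k : ℕ) :
    evenSum b (k + 2) s = b ^ 2 * evenSum b (k + 1) s +
      (dfac (2 * k) : ℝ) / dfac (2 * k + 3) * (b ^ 2 - s ^ 2) ^ ((2 * (k : ℝ) + 3) / 2) := by
  rw [evenSum, evenSum, show k + 2 - 1 = k + 1 by omega, sum_Icc_one_add_one, evenTerm_one,
    Nat.add_sub_cancel, mul_sum, add_comm]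
  congr 1
  exact sum_congr rfl fun i hi => evenTerm_add_one_add_one b s (k + 1) (mem_Icc.1 hi).1

lemma evenAntideriv_one (b : ℝ) : evenAntideriv b 1 = fun s => -(1 / s * arctanPart b s) := by
  funext s
  simp [evenAntideriv, evenSum, dfacRatio_one]

lemma evenAntideriv_add_two (b : ℝ) (k : ℕ) :
    evenAntideriv b (k + 2) = fun s =>
      (2 * k + 3) / (2 * k + 2) * b ^ 2 * evenAntideriv b (k + 1) s +
        1 / (2 * k + 2) * (1 / s * (b ^ 2 - s ^ 2) ^ ((2 * (k : ℝ) + 3) / 2)) := by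
  funext s
  rw [evenAntideriv, evenAntideriv, evenSum_add_two, show k + 2 - 1 = k + 1 by omega,
    Nat.add_sub_cancel]
  linear_combination (1 / s * (b ^ 2 - s ^ 2) ^ ((2 * (k : ℝ) + 3) / 2)) *
      dfacRatio_add_two_mul k +
    (1 / s * (b ^ 2 * evenSum b (k + 1) s - (b ^ 2) ^ (k + 1) * arctanPart b s)) *
      dfacRatio_add_two k

lemma hasDerivAt_sq_sub_sq (b s : ℝ) : HasDerivAt (fun s => b ^ 2 - s ^ 2) (-(2 * s)) s := by
  simpa using (hasDerivAt_pow 2 s).const_sub (b ^ 2)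

lemma hasDerivAt_arctanPart (b : ℝ) {s : ℝ} (hu : 0 < b ^ 2 - s ^ 2) :
    HasDerivAt (arctanPart b) (arctan (s / √(b ^ 2 - s ^ 2))) s := by
  have hsqrt := (hasDerivAt_sq_sub_sq b s).sqrt hu.ne'
  have hroot : 0 < √(b ^ 2 - s ^ 2) := sqrt_pos.2 hu
  have h := hsqrt.add ((hasDerivAt_id' s).mul ((hasDerivAt_id' s).div hsqrt hroot.ne').arctan)
  refine h.congr_deriv ?_
  simp only [Pi.div_apply]
  generalize √(b ^ 2 - s ^ 2) = t at hroot ⊢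
  field_simp
  ring

lemma hasDerivAt_one_div {s : ℝ} (hs : s ≠ 0) : HasDerivAt (fun s => 1 / s) (-(s ^ 2)⁻¹) s := by
  simpa only [one_div] using hasDerivAt_inv hs

lemma hasDerivAt_inv_mul_rpow (b p : ℝ) {s : ℝ} (hs : s ≠ 0) (hu : 0 < b ^ 2 - s ^ 2) :
    HasDerivAt (fun s => 1 / s * (b ^ 2 - s ^ 2) ^ p)
      (-((b ^ 2 - s ^ 2) ^ p / s ^ 2) - 2 * p * (b ^ 2 - s ^ 2) ^ (p - 1)) s := by
  refine ((hasDerivAt_one_div hs).mul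
    ((hasDerivAt_sq_sub_sq b s).rpow_const (p := p) (Or.inl hu.ne'))).congr_deriv ?_
  field_simp
  ring

lemma hasDerivAt_inv_mul_arctanPart (b : ℝ) {s : ℝ} (hs : s ≠ 0) (hu : 0 < b ^ 2 - s ^ 2) :
    HasDerivAt (fun s => 1 / s * arctanPart b s) (-(√(b ^ 2 - s ^ 2) / s ^ 2)) s := by
  refine ((hasDerivAt_one_div hs).mul (hasDerivAt_arctanPart b hu)).congr_deriv ?_
  rw [arctanPart]
  field_simp
  ring

lemma hasDerivAt_evenAntideriv {b s : ℝ} (hs : s ≠ 0) (hu : 0 < b ^ 2 - s ^ 2) {m : ℕ}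
    (hm : 1 ≤ m) :
    HasDerivAt (evenAntideriv b m) ((b ^ 2 - s ^ 2) ^ ((2 * (m : ℝ) - 1) / 2) / s ^ 2) s := by
  induction m, hm using Nat.le_induction with
  | base =>
    rw [evenAntideriv_one]
    refine (hasDerivAt_inv_mul_arctanPart b hs hu).neg.congr_deriv ?_
    norm_num [sqrt_eq_rpow]
  | succ m hm ih =>
    obtain ⟨k, rfl⟩ : ∃ k, m = k + 1 := ⟨m - 1, by omega⟩
    rw [evenAntideriv_add_two]
    refine ((ih.const_mul _).add
      ((hasDerivAt_inv_mul_rpow b ((2 * (k : ℝ) + 3) / 2) hs hu).const_mul _)).congr_deriv ?_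
    have hpow : (b ^ 2 - s ^ 2) ^ ((2 * (k : ℝ) + 3) / 2)
        = (b ^ 2 - s ^ 2) ^ ((2 * (k : ℝ) + 3) / 2 - 1) * (b ^ 2 - s ^ 2) := by
      rw [← rpow_add_one hu.ne', sub_add_cancel]
    push_cast
    rw [show (2 * ((k : ℝ) + 1 + 1) - 1) / 2 = (2 * k + 3) / 2 by ring,
      show (2 * ((k : ℝ) + 1) - 1) / 2 = (2 * k + 3) / 2 - 1 by ring, hpow]
    field_simp
    ring

theorem stmt_11_general (b : ℝ) (m : ℕ) (hm : 1 ≤ m) (F : ℝ → ℝ)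
    (hF : ∀ s : ℝ, F s =
      ((dfac (2 * m - 1) : ℝ) / (dfac (2 * m - 2))) * (1 / s) *
        (∑ i ∈ Finset.Icc 1 (m - 1),
          ((dfac (2 * m - 2 - 2 * i) : ℝ) / (dfac (2 * m - 2 * i + 1))) *
            (b ^ 2) ^ (i - 1) *
            (b ^ 2 - s ^ 2) ^ ((2 * (m : ℝ) - 2 * (i : ℝ) + 1) / 2)) -
      ((dfac (2 * m - 1) : ℝ) / (dfac (2 * m - 2))) * (1 / s) * (b ^ 2) ^ (m - 1) *
        (Real.sqrt (b ^ 2 - s ^ 2) +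
          s * Real.arctan (s / Real.sqrt (b ^ 2 - s ^ 2)))) :
    ∀ s ∈ Ioo (0 : ℝ) b,
      HasDerivAt F ((b ^ 2 - s ^ 2) ^ ((2 * (m : ℝ) - 1) / 2) / s ^ 2) s := by
  obtain rfl : F = evenAntideriv b m := funext hF
  intro s ⟨hs0, hsb⟩
  exact hasDerivAt_evenAntideriv hs0.ne' (by nlinarith) hm

/-- Lemma 2.2(a), even case n = 2m: the displayed F is an
antiderivative of s⁻²(b²−s²)^{(2m−1)/2} on (0,b). -/
theorem stmt_11 (b : ℝ) (hb : 0 < b) (m : ℕ) (hm : 1 ≤ m) (F : ℝ → ℝ)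
    (hF : ∀ s : ℝ, F s =
      ((dfac (2 * m - 1) : ℝ) / (dfac (2 * m - 2))) * (1 / s) *
        (∑ i ∈ Finset.Icc 1 (m - 1),
          ((dfac (2 * m - 2 - 2 * i) : ℝ) / (dfac (2 * m - 2 * i + 1))) *
            (b ^ 2) ^ (i - 1) *
            (b ^ 2 - s ^ 2) ^ ((2 * (m : ℝ) - 2 * (i : ℝ) + 1) / 2)) -
      ((dfac (2 * m - 1) : ℝ) / (dfac (2 * m - 2))) * (1 / s) * (b ^ 2) ^ (m - 1) *
        (Real.sqrt (b ^ 2 - s ^ 2) +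
          s * Real.arctan (s / Real.sqrt (b ^ 2 - s ^ 2)))) :
    ∀ s ∈ Ioo (0 : ℝ) b,
      HasDerivAt F ((b ^ 2 - s ^ 2) ^ ((2 * (m : ℝ) - 1) / 2) / s ^ 2) s :=
  stmt_11_general b m hm F hF
end

section
/- Fix b > 0 and an integer m ≥ 1, and adopt the double-factorial convention (−1)!! = 0!! = 1. Define F : (0,b) → ℝ by F(s) := [(2m)!!/(2m−1)!!]·(1/s)·[Σ_{i=1}^{m} [(2m−2i−1)!!/(2m−2i+2)!!]·(b²)^{i−1}·(b²−s²)^{m−i+1} − (b²)^{m}]. Then for every s ∈ (0,b): F'(s) = s^{−2}·(b² − s²)^{m}. -/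
open Set

/-!
Put `u = b²`, `t = u - s²`, `c_m = (2m)!!/(2m-1)!!` (`ratio m`), `e_j = (2j-1)!!/(2j+2)!!`
(`coeff j`) and `S(u, t) = ∑_{j < m} e_j u^{m-1-j} t^{j+1}` (`coeffSum m u t`). Then
`F(s) = -c_m (uᵐ - S)/s`, and since `dt/ds = -2s` with `s² = u - t`,
`s² F'(s) = c_m (uᵐ - S - 2(u - t) ∂ₜS)`. So the theorem is the polynomial identity
`c_m (uᵐ - S - 2(u - t) ∂ₜS) = tᵐ`, which follows by induction on `m` from
`S_{m+1} = u S_m + e_m t^{m+1}` and `e_m (2m+2) c_m = 1`.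
-/

namespace OddAntiderivative

lemma dfac_add_two (n : ℕ) : dfac (n + 2) = (n + 2) * dfac n := rfl

lemma dfac_pos (n : ℕ) : 0 < dfac n := by
  induction n using Nat.strong_induction_on with
  | _ n ih =>
    match n with
    | 0 | 1 => exact Nat.one_pos
    | n + 2 => exact Nat.mul_pos (by omega) (ih n (by omega))

lemma dfac_two_mul_add_one (m : ℕ) : dfac (2 * m + 1) = (2 * m + 1) * dfac (2 * m - 1) := by
  rcases m with _ | m
  · rfl
  · rw [show 2 * (m + 1) + 1 = (2 * m + 1) + 2 by ring, dfac_add_two,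
      show 2 * (m + 1) - 1 = 2 * m + 1 by omega]

noncomputable def ratio (m : ℕ) : ℝ := (dfac (2 * m) : ℝ) / dfac (2 * m - 1)

noncomputable def coeff (j : ℕ) : ℝ := (dfac (2 * j - 1) : ℝ) / dfac (2 * j + 2)

lemma ratio_succ (m : ℕ) : ratio (m + 1) = (2 * m + 2) / (2 * m + 1) * ratio m := by
  have h₁ := dfac_pos (2 * m)
  have h₂ := dfac_pos (2 * m - 1)
  rw [ratio, ratio, show 2 * (m + 1) = 2 * m + 2 by ring, show 2 * m + 2 - 1 = 2 * m + 1 by omega,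
    dfac_add_two, dfac_two_mul_add_one]
  push_cast
  field_simp

lemma coeff_mul_ratio (m : ℕ) : coeff m * ((2 * m + 2) * ratio m) = 1 := by
  have h₁ := dfac_pos (2 * m)
  have h₂ := dfac_pos (2 * m - 1)
  rw [coeff, ratio, dfac_add_two]
  push_cast
  field_simp

noncomputable def coeffSum (m : ℕ) (u t : ℝ) : ℝ :=
  ∑ j ∈ Finset.range m, coeff j * u ^ (m - 1 - j) * t ^ (j + 1)

noncomputable def coeffSumDeriv (m : ℕ) (u t : ℝ) : ℝ :=
  ∑ j ∈ Finset.range m, (j + 1) * coeff j * u ^ (m - 1 - j) * t ^ j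

lemma hasDerivAt_coeffSum (m : ℕ) (u t : ℝ) :
    HasDerivAt (coeffSum m u) (coeffSumDeriv m u t) t := by
  unfold coeffSum coeffSumDeriv
  refine HasDerivAt.fun_sum fun j _ => ?_
  convert (hasDerivAt_pow (j + 1) t).const_mul (coeff j * u ^ (m - 1 - j)) using 1
  · ext; ring
  · push_cast; ring

lemma coeffSum_succ (m : ℕ) (u t : ℝ) :
    coeffSum (m + 1) u t = u * coeffSum m u t + coeff m * t ^ (m + 1) := by
  rw [coeffSum, Finset.sum_range_succ, coeffSum, Finset.mul_sum, Nat.add_sub_cancel, Nat.sub_self,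
    pow_zero, mul_one]
  congr 1
  refine Finset.sum_congr rfl fun j hj => ?_
  rw [show m - j = (m - 1 - j) + 1 by simp at hj; omega]
  ring

lemma coeffSumDeriv_succ (m : ℕ) (u t : ℝ) :
    coeffSumDeriv (m + 1) u t = u * coeffSumDeriv m u t + (m + 1) * coeff m * t ^ m := by
  rw [coeffSumDeriv, Finset.sum_range_succ, coeffSumDeriv, Finset.mul_sum, Nat.add_sub_cancel,
    Nat.sub_self, pow_zero, mul_one]
  congr 1
  refine Finset.sum_congr rfl fun j hj => ?_
  rw [show m - j = (m - 1 - j) + 1 by simp at hj; omega]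
  ring

lemma ratio_mul_coeffSum (m : ℕ) (u t : ℝ) :
    ratio m * (u ^ m - coeffSum m u t - 2 * (u - t) * coeffSumDeriv m u t) = t ^ m := by
  induction m with
  | zero => simp [ratio, coeffSum, coeffSumDeriv, dfac]
  | succ m ih =>
    have hc := coeff_mul_ratio m
    rw [ratio_succ, coeffSum_succ, coeffSumDeriv_succ]
    field_simp
    linear_combination (2 * m + 2) * u * ih - t ^ m * (t + 2 * (m + 1) * (u - t)) * hc

lemma sum_Icc_eq_coeffSum (m : ℕ) (u t : ℝ) :
    ∑ i ∈ Finset.Icc 1 m, (dfac (2 * m - 2 * i - 1) : ℝ) / dfac (2 * m - 2 * i + 2) *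
      u ^ (i - 1) * t ^ (m - i + 1) = coeffSum m u t := by
  refine Finset.sum_nbij' (m - ·) (m - ·) (by simp; omega) (by simp; omega) (by simp; omega)
    (by simp; omega) fun i hi => ?_
  simp only [Finset.mem_Icc] at hi
  rw [coeff, show 2 * (m - i) - 1 = 2 * m - 2 * i - 1 by omega,
    show 2 * (m - i) + 2 = 2 * m - 2 * i + 2 by omega, show m - 1 - (m - i) = i - 1 by omega]

end OddAntiderivative

open OddAntiderivative in
theorem stmt_12_general (b : ℝ) (m : ℕ) (F : ℝ → ℝ)
    (hF : ∀ s : ℝ, F s =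
      ((dfac (2 * m) : ℝ) / (dfac (2 * m - 1))) * (1 / s) *
        ((∑ i ∈ Finset.Icc 1 m,
          ((dfac (2 * m - 2 * i - 1) : ℝ) / (dfac (2 * m - 2 * i + 2))) *
            (b ^ 2) ^ (i - 1) * (b ^ 2 - s ^ 2) ^ (m - i + 1)) - (b ^ 2) ^ m)) :
    ∀ s ∈ Ioo (0 : ℝ) b,
      HasDerivAt F ((b ^ 2 - s ^ 2) ^ m / s ^ 2) s := by
  intro s hs
  have hs₀ : s ≠ 0 := hs.1.ne'
  set u := b ^ 2
  have hF' : F = fun x => ratio m * ((1 / x) * (coeffSum m u (u - x ^ 2) - u ^ m)) := by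
    funext x
    rw [hF, sum_Icc_eq_coeffSum, ratio]
    ring
  have ht : HasDerivAt (fun x => u - x ^ 2) (-(2 * s)) s := by
    simpa using (hasDerivAt_pow 2 s).const_sub u
  have hS := (hasDerivAt_coeffSum m u (u - s ^ 2)).comp s ht
  have hinv : HasDerivAt (fun x : ℝ => 1 / x) (-(s ^ 2)⁻¹) s := by
    simpa [one_div] using hasDerivAt_inv hs₀
  rw [hF']
  refine ((hinv.fun_mul (hS.sub_const (u ^ m))).const_mul (ratio m)).congr_deriv ?_
  have key := ratio_mul_coeffSum m u (u - s ^ 2)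
  rw [sub_sub_cancel] at key
  rw [Function.comp_apply, ← key]
  field_simp
  ring

/-- Lemma 2.2(b), odd case n = 2m+1: the displayed F is an
antiderivative of s⁻²(b²−s²)^m on (0,b). -/
theorem stmt_12 (b : ℝ) (hb : 0 < b) (m : ℕ) (hm : 1 ≤ m) (F : ℝ → ℝ)
    (hF : ∀ s : ℝ, F s =
      ((dfac (2 * m) : ℝ) / (dfac (2 * m - 1))) * (1 / s) *
        ((∑ i ∈ Finset.Icc 1 m,
          ((dfac (2 * m - 2 * i - 1) : ℝ) / (dfac (2 * m - 2 * i + 2))) *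
            (b ^ 2) ^ (i - 1) * (b ^ 2 - s ^ 2) ^ (m - i + 1)) - (b ^ 2) ^ m)) :
    ∀ s ∈ Ioo (0 : ℝ) b,
      HasDerivAt F ((b ^ 2 - s ^ 2) ^ m / s ^ 2) s :=
  stmt_12_general b m F hF
end

section
/- Let ε, ξ, μ be real constants and h̃ a smooth real function. Define φ(x,s) := h̃(x)·s + √(ε + εξx + μ²s²)/(1 + ξx) and f(x) := (μ² + εξ)/(ε + (μ² + εξ)x). Then at every (x,s) with ε + εξx + μ²s² > 0, 1 + ξx ≠ 0 and ε + (μ² + εξ)x ≠ 0, φ satisfies the Douglas PDE ∂₂₂φ − 2(∂₁φ − s·∂₁₂φ) = f(x)·(φ − s·∂₂φ + (x − s²)·∂₂₂φ). -/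
open Set Filter

section aux
variable (ε ξ μ : ℝ) {htilde : ℝ → ℝ} {φ : ℝ → ℝ → ℝ}

lemma aux_d2 (hφ : ∀ x s : ℝ, φ x s = htilde x * s +
      Real.sqrt (ε + ε * ξ * x + μ ^ 2 * s ^ 2) / (1 + ξ * x))
    (x s : ℝ) (hA : 0 < ε + ε * ξ * x + μ ^ 2 * s ^ 2) (h1 : 1 + ξ * x ≠ 0) :
    d2 φ x s = htilde x + μ ^ 2 * s /
      (Real.sqrt (ε + ε * ξ * x + μ ^ 2 * s ^ 2) * (1 + ξ * x)) := by
  have hfun : (fun t => φ x t) = fun t => htilde x * t +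
      Real.sqrt (ε + ε * ξ * x + μ ^ 2 * t ^ 2) / (1 + ξ * x) := funext (hφ x)
  have hR : 0 < Real.sqrt (ε + ε * ξ * x + μ ^ 2 * s ^ 2) := Real.sqrt_pos.mpr hA
  have hinner : HasDerivAt (fun t => ε + ε * ξ * x + μ ^ 2 * t ^ 2) (μ ^ 2 * (2 * s)) s := by
    simpa using ((hasDerivAt_pow 2 s).const_mul (μ ^ 2)).const_add (ε + ε * ξ * x)
  have hsq : HasDerivAt (fun t => Real.sqrt (ε + ε * ξ * x + μ ^ 2 * t ^ 2))
      (1 / (2 * Real.sqrt (ε + ε * ξ * x + μ ^ 2 * s ^ 2)) * (μ ^ 2 * (2 * s))) s :=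
    (Real.hasDerivAt_sqrt hA.ne').comp s hinner
  have H : HasDerivAt (fun t => htilde x * t +
      Real.sqrt (ε + ε * ξ * x + μ ^ 2 * t ^ 2) / (1 + ξ * x))
      (htilde x * 1 + (1 / (2 * Real.sqrt (ε + ε * ξ * x + μ ^ 2 * s ^ 2)) * (μ ^ 2 * (2 * s))) / (1 + ξ * x)) s :=
    ((hasDerivAt_id s).const_mul (htilde x)).add (hsq.div_const _)
  rw [d2, hfun, H.deriv]
  field_simp

lemma aux_d1 (hht : ContDiff ℝ (⊤ : ℕ∞) htilde)
    (hφ : ∀ x s : ℝ, φ x s = htilde x * s +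
      Real.sqrt (ε + ε * ξ * x + μ ^ 2 * s ^ 2) / (1 + ξ * x))
    (x s : ℝ) (hA : 0 < ε + ε * ξ * x + μ ^ 2 * s ^ 2) (h1 : 1 + ξ * x ≠ 0) :
    d1 φ x s = deriv htilde x * s +
      (ε * ξ / (2 * Real.sqrt (ε + ε * ξ * x + μ ^ 2 * s ^ 2)) * (1 + ξ * x)
        - Real.sqrt (ε + ε * ξ * x + μ ^ 2 * s ^ 2) * ξ) / (1 + ξ * x) ^ 2 := by
  have hfun : (fun t => φ t s) = fun t => htilde t * s +
      Real.sqrt (ε + ε * ξ * t + μ ^ 2 * s ^ 2) / (1 + ξ * t) := funext (fun t => hφ t s)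
  have hR : 0 < Real.sqrt (ε + ε * ξ * x + μ ^ 2 * s ^ 2) := Real.sqrt_pos.mpr hA
  have hinner : HasDerivAt (fun t => ε + ε * ξ * t + μ ^ 2 * s ^ 2) (ε * ξ) x := by
    simpa using (((hasDerivAt_id x).const_mul (ε * ξ)).const_add ε).add_const (μ ^ 2 * s ^ 2)
  have hsq : HasDerivAt (fun t => Real.sqrt (ε + ε * ξ * t + μ ^ 2 * s ^ 2))
      (1 / (2 * Real.sqrt (ε + ε * ξ * x + μ ^ 2 * s ^ 2)) * (ε * ξ)) x :=
    (Real.hasDerivAt_sqrt hA.ne').comp x hinner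
  have hden : HasDerivAt (fun t => 1 + ξ * t) ξ x := by
    simpa using ((hasDerivAt_id x).const_mul ξ).const_add 1
  have hh : HasDerivAt htilde (deriv htilde x) x :=
    ((hht.differentiable (by simp)) x).hasDerivAt
  have H : HasDerivAt (fun t => htilde t * s +
      Real.sqrt (ε + ε * ξ * t + μ ^ 2 * s ^ 2) / (1 + ξ * t))
      (deriv htilde x * s +
        (1 / (2 * Real.sqrt (ε + ε * ξ * x + μ ^ 2 * s ^ 2)) * (ε * ξ) * (1 + ξ * x)
          - Real.sqrt (ε + ε * ξ * x + μ ^ 2 * s ^ 2) * ξ) / (1 + ξ * x) ^ 2) x :=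
    (hh.mul_const s).add (hsq.div hden h1)
  rw [d1, hfun, H.deriv]
  ring

lemma aux_d22 (hφ : ∀ x s : ℝ, φ x s = htilde x * s +
      Real.sqrt (ε + ε * ξ * x + μ ^ 2 * s ^ 2) / (1 + ξ * x))
    (x s : ℝ) (hA : 0 < ε + ε * ξ * x + μ ^ 2 * s ^ 2) (h1 : 1 + ξ * x ≠ 0) :
    d2 (d2 φ) x s = μ ^ 2 * (Real.sqrt (ε + ε * ξ * x + μ ^ 2 * s ^ 2) ^ 2 - μ ^ 2 * s ^ 2) /
      (Real.sqrt (ε + ε * ξ * x + μ ^ 2 * s ^ 2) ^ 3 * (1 + ξ * x)) := by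
  have hR : 0 < Real.sqrt (ε + ε * ξ * x + μ ^ 2 * s ^ 2) := Real.sqrt_pos.mpr hA
  have hev : (fun t => d2 φ x t) =ᶠ[nhds s] (fun t => htilde x + μ ^ 2 * t /
      (Real.sqrt (ε + ε * ξ * x + μ ^ 2 * t ^ 2) * (1 + ξ * x))) := by
    have hc : ContinuousAt (fun t : ℝ => ε + ε * ξ * x + μ ^ 2 * t ^ 2) s := by fun_prop
    filter_upwards [hc.eventually (eventually_gt_nhds hA)] with t ht
    exact aux_d2 ε ξ μ hφ x t ht h1
  have hinner : HasDerivAt (fun t => ε + ε * ξ * x + μ ^ 2 * t ^ 2) (μ ^ 2 * (2 * s)) s := by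
    simpa using ((hasDerivAt_pow 2 s).const_mul (μ ^ 2)).const_add (ε + ε * ξ * x)
  have hsq : HasDerivAt (fun t => Real.sqrt (ε + ε * ξ * x + μ ^ 2 * t ^ 2))
      (1 / (2 * Real.sqrt (ε + ε * ξ * x + μ ^ 2 * s ^ 2)) * (μ ^ 2 * (2 * s))) s :=
    (Real.hasDerivAt_sqrt hA.ne').comp s hinner
  have hdne : Real.sqrt (ε + ε * ξ * x + μ ^ 2 * s ^ 2) * (1 + ξ * x) ≠ 0 :=
    mul_ne_zero hR.ne' h1
  have H : HasDerivAt (fun t => htilde x + μ ^ 2 * t /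
      (Real.sqrt (ε + ε * ξ * x + μ ^ 2 * t ^ 2) * (1 + ξ * x)))
      ((μ ^ 2 * 1 * (Real.sqrt (ε + ε * ξ * x + μ ^ 2 * s ^ 2) * (1 + ξ * x)) -
        μ ^ 2 * s * (1 / (2 * Real.sqrt (ε + ε * ξ * x + μ ^ 2 * s ^ 2)) * (μ ^ 2 * (2 * s)) * (1 + ξ * x))) /
        (Real.sqrt (ε + ε * ξ * x + μ ^ 2 * s ^ 2) * (1 + ξ * x)) ^ 2) s :=
    ((((hasDerivAt_id s).const_mul (μ ^ 2)).div (hsq.mul_const (1 + ξ * x)) hdne).const_add (htilde x))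
  have hR2 : Real.sqrt (ε + ε * ξ * x + μ ^ 2 * s ^ 2) ^ 2 = ε + ε * ξ * x + μ ^ 2 * s ^ 2 := Real.sq_sqrt hA.le
  rw [d2, hev.deriv_eq, H.deriv]
  field_simp

lemma aux_d12 (hht : ContDiff ℝ (⊤ : ℕ∞) htilde)
    (hφ : ∀ x s : ℝ, φ x s = htilde x * s +
      Real.sqrt (ε + ε * ξ * x + μ ^ 2 * s ^ 2) / (1 + ξ * x))
    (x s : ℝ) (hA : 0 < ε + ε * ξ * x + μ ^ 2 * s ^ 2) (h1 : 1 + ξ * x ≠ 0) :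
    d1 (d2 φ) x s = deriv htilde x - μ ^ 2 * s *
      (ε * ξ / (2 * Real.sqrt (ε + ε * ξ * x + μ ^ 2 * s ^ 2)) * (1 + ξ * x)
        + Real.sqrt (ε + ε * ξ * x + μ ^ 2 * s ^ 2) * ξ) /
      (Real.sqrt (ε + ε * ξ * x + μ ^ 2 * s ^ 2) ^ 2 * (1 + ξ * x) ^ 2) := by
  have hR : 0 < Real.sqrt (ε + ε * ξ * x + μ ^ 2 * s ^ 2) := Real.sqrt_pos.mpr hA
  have hev : (fun t => d2 φ t s) =ᶠ[nhds x] (fun t => htilde t + μ ^ 2 * s /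
      (Real.sqrt (ε + ε * ξ * t + μ ^ 2 * s ^ 2) * (1 + ξ * t))) := by
    have hc : ContinuousAt (fun t : ℝ => ε + ε * ξ * t + μ ^ 2 * s ^ 2) x := by fun_prop
    have hc2 : ContinuousAt (fun t : ℝ => 1 + ξ * t) x := by fun_prop
    filter_upwards [hc.eventually (eventually_gt_nhds hA), hc2.eventually_ne h1] with t ht ht2
    exact aux_d2 ε ξ μ hφ t s ht ht2
  have hinner : HasDerivAt (fun t => ε + ε * ξ * t + μ ^ 2 * s ^ 2) (ε * ξ) x := by
    simpa using (((hasDerivAt_id x).const_mul (ε * ξ)).const_add ε).add_const (μ ^ 2 * s ^ 2)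
  have hsq : HasDerivAt (fun t => Real.sqrt (ε + ε * ξ * t + μ ^ 2 * s ^ 2))
      (1 / (2 * Real.sqrt (ε + ε * ξ * x + μ ^ 2 * s ^ 2)) * (ε * ξ)) x :=
    (Real.hasDerivAt_sqrt hA.ne').comp x hinner
  have hden : HasDerivAt (fun t => 1 + ξ * t) ξ x := by
    simpa using ((hasDerivAt_id x).const_mul ξ).const_add 1
  have hv : HasDerivAt (fun t => Real.sqrt (ε + ε * ξ * t + μ ^ 2 * s ^ 2) * (1 + ξ * t))
      (1 / (2 * Real.sqrt (ε + ε * ξ * x + μ ^ 2 * s ^ 2)) * (ε * ξ) * (1 + ξ * x)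
        + Real.sqrt (ε + ε * ξ * x + μ ^ 2 * s ^ 2) * ξ) x := hsq.mul hden
  have hdne : Real.sqrt (ε + ε * ξ * x + μ ^ 2 * s ^ 2) * (1 + ξ * x) ≠ 0 :=
    mul_ne_zero hR.ne' h1
  have hh : HasDerivAt htilde (deriv htilde x) x :=
    ((hht.differentiable (by simp)) x).hasDerivAt
  have H : HasDerivAt (fun t => htilde t + μ ^ 2 * s /
      (Real.sqrt (ε + ε * ξ * t + μ ^ 2 * s ^ 2) * (1 + ξ * t)))
      (deriv htilde x +
        (0 * (Real.sqrt (ε + ε * ξ * x + μ ^ 2 * s ^ 2) * (1 + ξ * x)) - μ ^ 2 * s *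
          (1 / (2 * Real.sqrt (ε + ε * ξ * x + μ ^ 2 * s ^ 2)) * (ε * ξ) * (1 + ξ * x)
            + Real.sqrt (ε + ε * ξ * x + μ ^ 2 * s ^ 2) * ξ)) /
          (Real.sqrt (ε + ε * ξ * x + μ ^ 2 * s ^ 2) * (1 + ξ * x)) ^ 2) x :=
    hh.add ((hasDerivAt_const x (μ ^ 2 * s)).div hv hdne)
  have hR2 : Real.sqrt (ε + ε * ξ * x + μ ^ 2 * s ^ 2) ^ 2 = ε + ε * ξ * x + μ ^ 2 * s ^ 2 := Real.sq_sqrt hA.le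
  rw [d1, hev.deriv_eq, H.deriv]
  field_simp
  ring
end aux


lemma key1 (ε ξ μ x s h' r : ℝ) (hr : r ≠ 0)
    (hr2 : r ^ 2 = ε + ε * ξ * x + μ ^ 2 * s ^ 2) (h1 : 1 + ξ * x ≠ 0) :
    μ ^ 2 * (r ^ 2 - μ ^ 2 * s ^ 2) / (r ^ 3 * (1 + ξ * x)) -
      2 * ((h' * s + (ε * ξ / (2 * r) * (1 + ξ * x) - r * ξ) / (1 + ξ * x) ^ 2) -
        s * (h' - μ ^ 2 * s * (ε * ξ / (2 * r) * (1 + ξ * x) + r * ξ) /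
          (r ^ 2 * (1 + ξ * x) ^ 2))) = ε * (μ ^ 2 + ε * ξ) / r ^ 3 := by
  field_simp
  linear_combination (2 * ξ * r ^ 2 + (μ ^ 2 + ξ * ε) * (1 + ξ * x)) * hr2

lemma key2 (ε ξ μ x s hx r : ℝ) (hr : r ≠ 0)
    (hr2 : r ^ 2 = ε + ε * ξ * x + μ ^ 2 * s ^ 2) (h1 : 1 + ξ * x ≠ 0)
    (h2 : ε + (μ ^ 2 + ε * ξ) * x ≠ 0) :
    (μ ^ 2 + ε * ξ) / (ε + (μ ^ 2 + ε * ξ) * x) *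
      (hx * s + r / (1 + ξ * x) - s * (hx + μ ^ 2 * s / (r * (1 + ξ * x))) +
        (x - s ^ 2) * (μ ^ 2 * (r ^ 2 - μ ^ 2 * s ^ 2) / (r ^ 3 * (1 + ξ * x)))) =
      ε * (μ ^ 2 + ε * ξ) / r ^ 3 := by
  field_simp
  linear_combination (μ ^ 2 + ε * ξ) * (r ^ 2 - μ ^ 2 * s ^ 2 + ε * (1 + ξ * x) + μ ^ 2 * x) * hr2

/-- Example 6.2: φ = h̃(x)s + √(ε + εξx + μ²s²)/(1 + ξx) satisfies
the Douglas PDE φ₂₂ − 2(φ₁ − sφ₁₂) = f(x)·(φ − sφ₂ + (x−s²)φ₂₂) with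
f(x) = (μ² + εξ)/(ε + (μ² + εξ)x). -/
theorem stmt_14 (ε ξ μ : ℝ) (htilde : ℝ → ℝ) (hht : ContDiff ℝ (⊤ : ℕ∞) htilde)
    (φ : ℝ → ℝ → ℝ) (f : ℝ → ℝ)
    (hφ : ∀ x s : ℝ, φ x s = htilde x * s +
      Real.sqrt (ε + ε * ξ * x + μ ^ 2 * s ^ 2) / (1 + ξ * x))
    (hf : ∀ x : ℝ, f x = (μ ^ 2 + ε * ξ) / (ε + (μ ^ 2 + ε * ξ) * x)) :
    ∀ x s : ℝ, 0 < ε + ε * ξ * x + μ ^ 2 * s ^ 2 → 1 + ξ * x ≠ 0 →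
      ε + (μ ^ 2 + ε * ξ) * x ≠ 0 →
      d2 (d2 φ) x s - 2 * (d1 φ x s - s * d1 (d2 φ) x s) =
        f x * (φ x s - s * d2 φ x s + (x - s ^ 2) * d2 (d2 φ) x s) := by
  intro x s hA h1 h2
  have hR : 0 < Real.sqrt (ε + ε * ξ * x + μ ^ 2 * s ^ 2) := Real.sqrt_pos.mpr hA
  have hR2 : Real.sqrt (ε + ε * ξ * x + μ ^ 2 * s ^ 2) ^ 2 = ε + ε * ξ * x + μ ^ 2 * s ^ 2 :=
    Real.sq_sqrt hA.le
  have e1 := key1 ε ξ μ x s (deriv htilde x) _ hR.ne' hR2 h1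
  have e2 := key2 ε ξ μ x s (htilde x) _ hR.ne' hR2 h1 h2
  rw [aux_d2 ε ξ μ hφ x s hA h1, aux_d1 ε ξ μ hht hφ x s hA h1,
    aux_d22 ε ξ μ hφ x s hA h1, aux_d12 ε ξ μ hht hφ x s hA h1, hφ x s, hf x]
  linear_combination e1 - e2
end

section
/- Let h̃ be a smooth real function and define φ(x,s) := h̃(x)·s + (1 − x + 2s²)/((1 − x)²·√(1 − x + s²)). Then φ satisfies ∂₂₂φ − 2(∂₁φ − s·∂₁₂φ) = 0 at every (x,s) with x < 1 and 1 − x + s² > 0. Moreover, φ − s·∂₂φ = (1 − x + s²)^{−3/2}. -/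
open Set

lemma hw_pos {x : ℝ} (hx : x < 1) (s : ℝ) : 0 < 1 - x + s ^ 2 := by nlinarith [sq_nonneg s]

lemma rpow_succ {w : ℝ} (hw : 0 < w) (a : ℝ) : w ^ (a + 1) = w * w ^ a := by
  rw [Real.rpow_add hw, Real.rpow_one, mul_comm]

lemma e12 {x : ℝ} (hx : x < 1) (s : ℝ) :
    (1 - x + s ^ 2) ^ (-(1:ℝ)/2) = (1 - x + s ^ 2) * (1 - x + s ^ 2) ^ (-(3:ℝ)/2) := by
  rw [show (-(1:ℝ)/2) = -(3:ℝ)/2 + 1 by norm_num]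
  exact rpow_succ (hw_pos hx s) _

lemma e32 {x : ℝ} (hx : x < 1) (s : ℝ) :
    (1 - x + s ^ 2) ^ (-(3:ℝ)/2) = (1 - x + s ^ 2) * (1 - x + s ^ 2) ^ (-(5:ℝ)/2) := by
  rw [show (-(3:ℝ)/2) = -(5:ℝ)/2 + 1 by norm_num]
  exact rpow_succ (hw_pos hx s) _

lemma div_form {x : ℝ} (hx : x < 1) (t : ℝ) :
    (1 - x + 2 * t ^ 2) / ((1 - x) ^ 2 * Real.sqrt (1 - x + t ^ 2)) =
      (1 - x + 2 * t ^ 2) * (((1 - x) ^ 2)⁻¹ * (1 - x + t ^ 2) ^ (-(1:ℝ)/2)) := by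
  have hw := hw_pos hx t
  rw [div_eq_mul_inv, mul_inv, Real.sqrt_eq_rpow,
    show (-(1:ℝ)/2) = -(1/2 : ℝ) by norm_num, Real.rpow_neg hw.le]

lemma L2 (c : ℝ) {x : ℝ} (hx : x < 1) (s : ℝ) :
    HasDerivAt (fun t => c * t + (1 - x + 2 * t ^ 2) * (((1 - x) ^ 2)⁻¹ * (1 - x + t ^ 2) ^ (-(1:ℝ)/2)))
      (c + ((1 - x) ^ 2)⁻¹ * (s * (3 * (1 - x) + 2 * s ^ 2)) * (1 - x + s ^ 2) ^ (-(3:ℝ)/2)) s := by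
  have hw := hw_pos hx s
  have hWd : HasDerivAt (fun t : ℝ => 1 - x + t ^ 2) (2 * s) s := by
    simpa using (hasDerivAt_pow 2 s).const_add (1 - x)
  have hP : HasDerivAt (fun t => (1 - x + t ^ 2) ^ (-(1:ℝ)/2))
      (2 * s * (-(1:ℝ)/2) * (1 - x + s ^ 2) ^ (-(1:ℝ)/2 - 1)) s :=
    hWd.rpow_const (Or.inl hw.ne')
  have hA : HasDerivAt (fun t : ℝ => 1 - x + 2 * t ^ 2) (4 * s) s := by
    have := ((hasDerivAt_pow 2 s).const_mul 2).const_add (1 - x)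
    simpa using this.congr_deriv (by push_cast; ring)
  have htl : HasDerivAt (fun t => c * t) c s := by
    simpa using (hasDerivAt_id s).const_mul c
  have := htl.add (hA.mul (hP.const_mul (((1 - x) ^ 2)⁻¹)))
  refine this.congr_deriv ?_
  rw [show (-(1:ℝ)/2 - 1) = -(3:ℝ)/2 by norm_num, e12 hx s]
  ring

lemma L22 (c : ℝ) {x : ℝ} (hx : x < 1) (s : ℝ) :
    HasDerivAt (fun t => c + ((1 - x) ^ 2)⁻¹ * (t * (3 * (1 - x) + 2 * t ^ 2)) * (1 - x + t ^ 2) ^ (-(3:ℝ)/2))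
      (3 * (1 - x + s ^ 2) ^ (-(5:ℝ)/2)) s := by
  have hw := hw_pos hx s
  have hu : (1 - x) ≠ 0 := ne_of_gt (by linarith)
  have hWd : HasDerivAt (fun t : ℝ => 1 - x + t ^ 2) (2 * s) s := by
    simpa using (hasDerivAt_pow 2 s).const_add (1 - x)
  have hQ : HasDerivAt (fun t => (1 - x + t ^ 2) ^ (-(3:ℝ)/2))
      (2 * s * (-(3:ℝ)/2) * (1 - x + s ^ 2) ^ (-(3:ℝ)/2 - 1)) s :=
    hWd.rpow_const (Or.inl hw.ne')
  have hinner : HasDerivAt (fun t : ℝ => 3 * (1 - x) + 2 * t ^ 2) (4 * s) s := by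
    have := ((hasDerivAt_pow 2 s).const_mul 2).const_add (3 * (1 - x))
    simpa using this.congr_deriv (by push_cast; ring)
  have hpoly : HasDerivAt (fun t : ℝ => t * (3 * (1 - x) + 2 * t ^ 2))
      (1 * (3 * (1 - x) + 2 * s ^ 2) + s * (4 * s)) s := (hasDerivAt_id s).mul hinner
  have := (((hpoly.const_mul (((1 - x) ^ 2)⁻¹)).mul hQ)).const_add c
  refine this.congr_deriv ?_
  rw [show (-(3:ℝ)/2 - 1) = -(5:ℝ)/2 by norm_num, e32 hx s]
  field_simp
  ring

lemma L1 (htilde : ℝ → ℝ) (hht : ContDiff ℝ (⊤ : ℕ∞) htilde) {x : ℝ} (hx : x < 1) (s : ℝ) :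
    HasDerivAt (fun t => htilde t * s + (1 - t + 2 * s ^ 2) * (((1 - t) ^ 2)⁻¹ * (1 - t + s ^ 2) ^ (-(1:ℝ)/2)))
      (deriv htilde x * s + ((1 - x) ^ 3)⁻¹ *
        ((3/2) * (1 - x) ^ 2 + 6 * (1 - x) * s ^ 2 + 4 * s ^ 4) * (1 - x + s ^ 2) ^ (-(3:ℝ)/2)) x := by
  have hw := hw_pos hx s
  have hu : (1 - x) ≠ 0 := ne_of_gt (by linarith)
  have hH : HasDerivAt htilde (deriv htilde x) x :=
    (hht.differentiable (by simp) x).hasDerivAt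
  have hsub : HasDerivAt (fun t : ℝ => 1 - t) (-1) x := by
    simpa using (hasDerivAt_id x).const_sub 1
  have hA : HasDerivAt (fun t : ℝ => 1 - t + 2 * s ^ 2) (-1) x := hsub.add_const _
  have hB : HasDerivAt (fun t : ℝ => ((1 - t) ^ 2)⁻¹)
      (-((2:ℕ) * (1 - x) ^ 1 * (-1)) / ((1 - x) ^ 2) ^ 2) x :=
    (hsub.pow 2).inv (pow_ne_zero 2 hu)
  have hWd : HasDerivAt (fun t : ℝ => 1 - t + s ^ 2) (-1) x := hsub.add_const _
  have hC : HasDerivAt (fun t => (1 - t + s ^ 2) ^ (-(1:ℝ)/2))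
      ((-1) * (-(1:ℝ)/2) * (1 - x + s ^ 2) ^ (-(1:ℝ)/2 - 1)) x :=
    hWd.rpow_const (Or.inl hw.ne')
  have := (hH.mul_const s).add (hA.mul (hB.mul hC))
  refine this.congr_deriv ?_
  simp only [Pi.mul_apply]
  rw [show (-(1:ℝ)/2 - 1) = -(3:ℝ)/2 by norm_num, e12 hx s]
  field_simp
  ring

lemma L12 (htilde : ℝ → ℝ) (hht : ContDiff ℝ (⊤ : ℕ∞) htilde) {x : ℝ} (hx : x < 1) (s : ℝ) :
    HasDerivAt (fun t => htilde t + ((1 - t) ^ 2)⁻¹ * (s * (3 * (1 - t) + 2 * s ^ 2)) * (1 - t + s ^ 2) ^ (-(3:ℝ)/2))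
      (deriv htilde x + s * ((1 - x) ^ 3)⁻¹ *
        ((15/2) * (1 - x) ^ 2 + 10 * (1 - x) * s ^ 2 + 4 * s ^ 4) * (1 - x + s ^ 2) ^ (-(5:ℝ)/2)) x := by
  have hw := hw_pos hx s
  have hu : (1 - x) ≠ 0 := ne_of_gt (by linarith)
  have hH : HasDerivAt htilde (deriv htilde x) x :=
    (hht.differentiable (by simp) x).hasDerivAt
  have hsub : HasDerivAt (fun t : ℝ => 1 - t) (-1) x := by
    simpa using (hasDerivAt_id x).const_sub 1
  have hB : HasDerivAt (fun t : ℝ => ((1 - t) ^ 2)⁻¹)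
      (-((2:ℕ) * (1 - x) ^ 1 * (-1)) / ((1 - x) ^ 2) ^ 2) x :=
    (hsub.pow 2).inv (pow_ne_zero 2 hu)
  have hpoly : HasDerivAt (fun t : ℝ => s * (3 * (1 - t) + 2 * s ^ 2)) (s * (3 * (-1))) x := by
    exact (((hsub.const_mul 3).add_const (2 * s ^ 2))).const_mul s
  have hWd : HasDerivAt (fun t : ℝ => 1 - t + s ^ 2) (-1) x := hsub.add_const _
  have hC : HasDerivAt (fun t => (1 - t + s ^ 2) ^ (-(3:ℝ)/2))
      ((-1) * (-(3:ℝ)/2) * (1 - x + s ^ 2) ^ (-(3:ℝ)/2 - 1)) x :=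
    hWd.rpow_const (Or.inl hw.ne')
  have := hH.add ((hB.mul hpoly).mul hC)
  refine this.congr_deriv ?_
  simp only [Pi.mul_apply]
  rw [show (-(3:ℝ)/2 - 1) = -(5:ℝ)/2 by norm_num, e32 hx s]
  field_simp
  ring

/-- Example 6.4: φ = h̃(x)s + (1−x+2s²)/((1−x)²√(1−x+s²)) satisfies
φ₂₂ − 2(φ₁ − sφ₁₂) = 0 for x < 1, 1−x+s² > 0, and φ − sφ₂ = (1−x+s²)^{−3/2}. -/
theorem stmt_16 (htilde : ℝ → ℝ) (hht : ContDiff ℝ (⊤ : ℕ∞) htilde)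
    (φ : ℝ → ℝ → ℝ)
    (hφ : ∀ x s : ℝ, φ x s = htilde x * s +
      (1 - x + 2 * s ^ 2) / ((1 - x) ^ 2 * Real.sqrt (1 - x + s ^ 2))) :
    ∀ x s : ℝ, x < 1 → 0 < 1 - x + s ^ 2 →
      (d2 (d2 φ) x s - 2 * (d1 φ x s - s * d1 (d2 φ) x s) = 0) ∧
      φ x s - s * d2 φ x s = (1 - x + s ^ 2) ^ (-(3 : ℝ) / 2) := by
  have key : ∀ x' : ℝ, x' < 1 → ∀ s' : ℝ, d2 φ x' s' =
      htilde x' + ((1 - x') ^ 2)⁻¹ * (s' * (3 * (1 - x') + 2 * s' ^ 2)) *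
        (1 - x' + s' ^ 2) ^ (-(3:ℝ)/2) := by
    intro x' hx' s'
    have hfun : (fun t => φ x' t) = (fun t => htilde x' * t +
        (1 - x' + 2 * t ^ 2) * (((1 - x') ^ 2)⁻¹ * (1 - x' + t ^ 2) ^ (-(1:ℝ)/2))) :=
      funext fun t => by rw [hφ, div_form hx']
    unfold d2
    rw [hfun]
    exact (L2 (htilde x') hx' s').deriv
  intro x s hx _
  have hu : (1 - x) ≠ 0 := ne_of_gt (by linarith)
  -- second derivative in s
  have hd22 : d2 (d2 φ) x s = 3 * (1 - x + s ^ 2) ^ (-(5:ℝ)/2) := by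
    have hfun : (fun t => d2 φ x t) = (fun t => htilde x +
        ((1 - x) ^ 2)⁻¹ * (t * (3 * (1 - x) + 2 * t ^ 2)) * (1 - x + t ^ 2) ^ (-(3:ℝ)/2)) :=
      funext fun t => key x hx t
    rw [show d2 (d2 φ) x s = deriv (fun t => d2 φ x t) s from rfl, hfun]
    exact (L22 (htilde x) hx s).deriv
  -- first derivative in x
  have hd1 : d1 φ x s = deriv htilde x * s + ((1 - x) ^ 3)⁻¹ *
      ((3/2) * (1 - x) ^ 2 + 6 * (1 - x) * s ^ 2 + 4 * s ^ 4) * (1 - x + s ^ 2) ^ (-(3:ℝ)/2) := by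
    have hev : (fun t => htilde t * s +
        (1 - t + 2 * s ^ 2) * (((1 - t) ^ 2)⁻¹ * (1 - t + s ^ 2) ^ (-(1:ℝ)/2)))
        =ᶠ[nhds x] (fun t => φ t s) := by
      filter_upwards [Iio_mem_nhds hx] with t ht
      rw [hφ, div_form ht]
    exact ((L1 htilde hht hx s).congr_of_eventuallyEq hev.symm).deriv
  have hd12 : d1 (d2 φ) x s = deriv htilde x + s * ((1 - x) ^ 3)⁻¹ *
      ((15/2) * (1 - x) ^ 2 + 10 * (1 - x) * s ^ 2 + 4 * s ^ 4) * (1 - x + s ^ 2) ^ (-(5:ℝ)/2) := by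
    have hev : (fun t => htilde t +
        ((1 - t) ^ 2)⁻¹ * (s * (3 * (1 - t) + 2 * s ^ 2)) * (1 - t + s ^ 2) ^ (-(3:ℝ)/2))
        =ᶠ[nhds x] (fun t => d2 φ t s) := by
      filter_upwards [Iio_mem_nhds hx] with t ht
      exact (key t ht s).symm
    exact ((L12 htilde hht hx s).congr_of_eventuallyEq hev.symm).deriv
  constructor
  · rw [hd22, hd1, hd12, e32 hx s]
    field_simp
    ring
  · rw [hφ, div_form hx, key x hx s, e12 hx s]
    field_simp
    ring
end

section
/- Let c > 0 and ε be real constants and h̃ a smooth real function. Define φ(x,s) := h̃(x)·s + (1/2)·[√(c − x + s²)/(c − x) − ε·√(c − ε²(x − s²))/(c − ε²x)]. Then φ satisfies ∂₂₂φ − 2(∂₁φ − s·∂₁₂φ) = 0 at every (x,s) with c − x + s² > 0, c − ε²(x − s²) > 0, c − x ≠ 0 and c − ε²x ≠ 0. Moreover, φ − s·∂₂φ = (1/2)·[1/√(c − x + s²) − ε/√(c − ε²(x − s²))]. -/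
open Set

lemma sqrtD' {u : ℝ → ℝ} {u' t : ℝ} (h : HasDerivAt u u' t) (hp : u t ≠ 0) :
    HasDerivAt (fun y => Real.sqrt (u y)) (u' / (2 * Real.sqrt (u t))) t := by
  have := (Real.hasDerivAt_sqrt hp).comp t h
  refine this.congr_deriv ?_
  ring

/-- the explicit formula for ∂₂φ -/
noncomputable def psi' (c ε : ℝ) (h : ℝ → ℝ) (x s : ℝ) : ℝ :=
  h x + (1 / 2) * (s / (Real.sqrt (c - x + s ^ 2) * (c - x)) -
    ε ^ 3 * (s / (Real.sqrt (c - ε ^ 2 * (x - s ^ 2)) * (c - ε ^ 2 * x))))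

lemma d2form' (c ε : ℝ) (htilde : ℝ → ℝ) (φ : ℝ → ℝ → ℝ)
    (hφ : ∀ x s : ℝ, φ x s = htilde x * s +
      (1 / 2) * (Real.sqrt (c - x + s ^ 2) / (c - x) -
        ε * Real.sqrt (c - ε ^ 2 * (x - s ^ 2)) / (c - ε ^ 2 * x)))
    (x s : ℝ) (hA : 0 < c - x + s ^ 2) (hB : 0 < c - ε ^ 2 * (x - s ^ 2))
    (hu : c - x ≠ 0) (hv : c - ε ^ 2 * x ≠ 0) :
    HasDerivAt (fun t => φ x t) (psi' c ε htilde x s) s := by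
  have hfun : (fun t => φ x t) = (fun t => htilde x * t +
      (1 / 2) * (Real.sqrt (c - x + t ^ 2) / (c - x) -
        ε * Real.sqrt (c - ε ^ 2 * (x - t ^ 2)) / (c - ε ^ 2 * x))) :=
    funext fun t => hφ x t
  rw [hfun]
  have h1 : HasDerivAt (fun t : ℝ => c - x + t ^ 2) (2 * s) s := by
    simpa using (hasDerivAt_pow 2 s).const_add (c - x)
  have h2 : HasDerivAt (fun t : ℝ => c - ε ^ 2 * (x - t ^ 2))
      (-(ε ^ 2 * -(2 * s))) s := by
    have := (((hasDerivAt_pow 2 s).const_sub x).const_mul (ε ^ 2)).const_sub c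
    simpa using this
  have ha := Real.sqrt_pos.mpr hA
  have hb := Real.sqrt_pos.mpr hB
  have raw := (((sqrtD' h1 hA.ne').div_const (c - x)).sub
      (((sqrtD' h2 hB.ne').const_mul ε).div_const (c - ε ^ 2 * x))).const_mul (1 / 2)
  have raw2 := ((hasDerivAt_id s).const_mul (htilde x)).add raw
  refine raw2.congr_deriv ?_
  beta_reduce
  simp only [psi']
  field_simp

set_option maxHeartbeats 1000000

/-- Example 6.5: φ = h̃(x)s + (1/2)[√(c−x+s²)/(c−x) −
ε√(c−ε²(x−s²))/(c−ε²x)] satisfies φ₂₂ − 2(φ₁ − sφ₁₂) = 0, and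
φ − sφ₂ = (1/2)[1/√(c−x+s²) − ε/√(c−ε²(x−s²))]. -/
theorem stmt_17 (c ε : ℝ) (hc : 0 < c) (htilde : ℝ → ℝ)
    (hht : ContDiff ℝ (⊤ : ℕ∞) htilde) (φ : ℝ → ℝ → ℝ)
    (hφ : ∀ x s : ℝ, φ x s = htilde x * s +
      (1 / 2) * (Real.sqrt (c - x + s ^ 2) / (c - x) -
        ε * Real.sqrt (c - ε ^ 2 * (x - s ^ 2)) / (c - ε ^ 2 * x))) :
    ∀ x s : ℝ, 0 < c - x + s ^ 2 → 0 < c - ε ^ 2 * (x - s ^ 2) →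
      c - x ≠ 0 → c - ε ^ 2 * x ≠ 0 →
      (d2 (d2 φ) x s - 2 * (d1 φ x s - s * d1 (d2 φ) x s) = 0) ∧
      φ x s - s * d2 φ x s =
        (1 / 2) * (1 / Real.sqrt (c - x + s ^ 2) -
          ε / Real.sqrt (c - ε ^ 2 * (x - s ^ 2))) := by
  intro x s hA hB hu hv
  have ha := Real.sqrt_pos.mpr hA
  have hb := Real.sqrt_pos.mpr hB
  have ha2 : Real.sqrt (c - x + s ^ 2) ^ 2 = c - x + s ^ 2 := Real.sq_sqrt hA.le
  have hb2 : Real.sqrt (c - ε ^ 2 * (x - s ^ 2)) ^ 2 = c - ε ^ 2 * (x - s ^ 2) :=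
    Real.sq_sqrt hB.le
  -- eventually facts in the t-direction (x fixed)
  have hEs1 : ∀ᶠ t in nhds s, 0 < c - x + t ^ 2 :=
    continuousAt_const.eventually_lt (by fun_prop) hA
  have hEs2 : ∀ᶠ t in nhds s, 0 < c - ε ^ 2 * (x - t ^ 2) :=
    continuousAt_const.eventually_lt (by fun_prop) hB
  -- eventually facts in the x-direction (s fixed)
  have hEx1 : ∀ᶠ t in nhds x, 0 < c - t + s ^ 2 :=
    continuousAt_const.eventually_lt (by fun_prop) hA
  have hEx2 : ∀ᶠ t in nhds x, 0 < c - ε ^ 2 * (t - s ^ 2) :=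
    continuousAt_const.eventually_lt (by fun_prop) hB
  have hEx3 : ∀ᶠ t in nhds x, c - t ≠ 0 :=
    (by fun_prop : ContinuousAt (fun t : ℝ => c - t) x).eventually_ne hu
  have hEx4 : ∀ᶠ t in nhds x, c - ε ^ 2 * t ≠ 0 :=
    (by fun_prop : ContinuousAt (fun t : ℝ => c - ε ^ 2 * t) x).eventually_ne hv
  -- d2 φ equals psi' eventually in both directions
  have heqs : (fun t => d2 φ x t) =ᶠ[nhds s] (fun t => psi' c ε htilde x t) := by
    filter_upwards [hEs1, hEs2] with t h1 h2
    exact (d2form' c ε htilde φ hφ x t h1 h2 hu hv).deriv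
  have heqx : (fun t => d2 φ t s) =ᶠ[nhds x] (fun t => psi' c ε htilde t s) := by
    filter_upwards [hEx1, hEx2, hEx3, hEx4] with t h1 h2 h3 h4
    exact (d2form' c ε htilde φ hφ t s h1 h2 h3 h4).deriv
  -- value of d2 φ at the point
  have e2 : d2 φ x s = psi' c ε htilde x s :=
    (d2form' c ε htilde φ hφ x s hA hB hu hv).deriv
  -- H22 : derivative of psi' x · in s
  have H22 : HasDerivAt (fun t => psi' c ε htilde x t)
      ((1 / 2) * (1 / Real.sqrt (c - x + s ^ 2) ^ 3 -
        ε ^ 3 * (1 / Real.sqrt (c - ε ^ 2 * (x - s ^ 2)) ^ 3))) s := by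
    have h1 : HasDerivAt (fun t : ℝ => c - x + t ^ 2) (2 * s) s := by
      simpa using (hasDerivAt_pow 2 s).const_add (c - x)
    have h2 : HasDerivAt (fun t : ℝ => c - ε ^ 2 * (x - t ^ 2))
        (-(ε ^ 2 * -(2 * s))) s := by
      simpa using (((hasDerivAt_pow 2 s).const_sub x).const_mul (ε ^ 2)).const_sub c
    have hdenA : HasDerivAt (fun t : ℝ => Real.sqrt (c - x + t ^ 2) * (c - x))
        ((2 * s) / (2 * Real.sqrt (c - x + s ^ 2)) * (c - x)) s := by
      have := (sqrtD' h1 hA.ne').mul_const (c - x)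
      convert this using 2
    have hdenB : HasDerivAt
        (fun t : ℝ => Real.sqrt (c - ε ^ 2 * (x - t ^ 2)) * (c - ε ^ 2 * x))
        ((-(ε ^ 2 * -(2 * s))) / (2 * Real.sqrt (c - ε ^ 2 * (x - s ^ 2))) *
          (c - ε ^ 2 * x)) s := by
      have := (sqrtD' h2 hB.ne').mul_const (c - ε ^ 2 * x)
      convert this using 2
    have hneA : Real.sqrt (c - x + s ^ 2) * (c - x) ≠ 0 := mul_ne_zero ha.ne' hu
    have hneB : Real.sqrt (c - ε ^ 2 * (x - s ^ 2)) * (c - ε ^ 2 * x) ≠ 0 :=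
      mul_ne_zero hb.ne' hv
    have termA := (hasDerivAt_id' s).div hdenA hneA
    have termB := ((hasDerivAt_id' s).div hdenB hneB).const_mul (ε ^ 3)
    have raw := ((termA.sub termB).const_mul (1 / 2)).const_add (htilde x)
    simp only [psi']
    refine raw.congr_deriv ?_
    have e1' : c - x = Real.sqrt (c - x + s ^ 2) ^ 2 - s ^ 2 := by rw [ha2]; ring
    have e2' : c - ε ^ 2 * x =
        Real.sqrt (c - ε ^ 2 * (x - s ^ 2)) ^ 2 - ε ^ 2 * s ^ 2 := by rw [hb2]; ring
    have hu2 : Real.sqrt (c - x + s ^ 2) ^ 2 - s ^ 2 ≠ 0 := e1' ▸ hu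
    have hv2 : Real.sqrt (c - ε ^ 2 * (x - s ^ 2)) ^ 2 - ε ^ 2 * s ^ 2 ≠ 0 := e2' ▸ hv
    set a := Real.sqrt (c - x + s ^ 2) with haa
    set b := Real.sqrt (c - ε ^ 2 * (x - s ^ 2)) with hbb
    rw [e1', e2']
    have hv3 : b ^ 2 - s ^ 2 * ε ^ 2 ≠ 0 := by rwa [mul_comm (ε ^ 2)] at hv2
    field_simp
  -- H1 : derivative of φ · s in x
  have H1 : HasDerivAt (fun t => φ t s)
      (deriv htilde x * s + (1 / 4) * ((c - x + 2 * s ^ 2) /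
          (Real.sqrt (c - x + s ^ 2) * (c - x) ^ 2) -
        ε ^ 3 * ((c - ε ^ 2 * x + 2 * ε ^ 2 * s ^ 2) /
          (Real.sqrt (c - ε ^ 2 * (x - s ^ 2)) * (c - ε ^ 2 * x) ^ 2)))) x := by
    have hfun : (fun t => φ t s) = (fun t => htilde t * s +
        (1 / 2) * (Real.sqrt (c - t + s ^ 2) / (c - t) -
          ε * Real.sqrt (c - ε ^ 2 * (t - s ^ 2)) / (c - ε ^ 2 * t))) :=
      funext fun t => hφ t s
    rw [hfun]
    have hh : HasDerivAt htilde (deriv htilde x) x :=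
      (hht.differentiable (by simp) x).hasDerivAt
    have g1 : HasDerivAt (fun t : ℝ => c - t + s ^ 2) (-1) x := by
      simpa using ((hasDerivAt_id' x).const_sub c).add_const (s ^ 2)
    have gden1 : HasDerivAt (fun t : ℝ => c - t) (-1) x := by
      simpa using (hasDerivAt_id' x).const_sub c
    have g2 : HasDerivAt (fun t : ℝ => c - ε ^ 2 * (t - s ^ 2)) (-(ε ^ 2 * 1)) x := by
      simpa using (((hasDerivAt_id' x).sub_const (s ^ 2)).const_mul (ε ^ 2)).const_sub c
    have gden2 : HasDerivAt (fun t : ℝ => c - ε ^ 2 * t) (-(ε ^ 2 * 1)) x := by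
      simpa using ((hasDerivAt_id' x).const_mul (ε ^ 2)).const_sub c
    have termA := (sqrtD' g1 hA.ne').div gden1 hu
    have termB := ((sqrtD' g2 hB.ne').const_mul ε).div gden2 hv
    have raw := (hh.mul_const s).add ((termA.sub termB).const_mul (1 / 2))
    refine raw.congr_deriv ?_
    beta_reduce
    have e1' : c - x = Real.sqrt (c - x + s ^ 2) ^ 2 - s ^ 2 := by rw [ha2]; ring
    have e2' : c - ε ^ 2 * x =
        Real.sqrt (c - ε ^ 2 * (x - s ^ 2)) ^ 2 - ε ^ 2 * s ^ 2 := by rw [hb2]; ring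
    have hu2 : Real.sqrt (c - x + s ^ 2) ^ 2 - s ^ 2 ≠ 0 := e1' ▸ hu
    have hv2 : Real.sqrt (c - ε ^ 2 * (x - s ^ 2)) ^ 2 - ε ^ 2 * s ^ 2 ≠ 0 := e2' ▸ hv
    set a := Real.sqrt (c - x + s ^ 2) with haa
    set b := Real.sqrt (c - ε ^ 2 * (x - s ^ 2)) with hbb
    rw [e1', e2']
    field_simp
    ring
  -- H12 : derivative of psi' · s in x
  have H12 : HasDerivAt (fun t => psi' c ε htilde t s)
      (deriv htilde x + (s / 4) * ((3 * (c - x) + 2 * s ^ 2) /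
          (Real.sqrt (c - x + s ^ 2) ^ 3 * (c - x) ^ 2) -
        ε ^ 5 * ((3 * (c - ε ^ 2 * x) + 2 * ε ^ 2 * s ^ 2) /
          (Real.sqrt (c - ε ^ 2 * (x - s ^ 2)) ^ 3 * (c - ε ^ 2 * x) ^ 2)))) x := by
    have hh : HasDerivAt htilde (deriv htilde x) x :=
      (hht.differentiable (by simp) x).hasDerivAt
    have g1 : HasDerivAt (fun t : ℝ => c - t + s ^ 2) (-1) x := by
      simpa using ((hasDerivAt_id' x).const_sub c).add_const (s ^ 2)
    have gden1 : HasDerivAt (fun t : ℝ => c - t) (-1) x := by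
      simpa using (hasDerivAt_id' x).const_sub c
    have g2 : HasDerivAt (fun t : ℝ => c - ε ^ 2 * (t - s ^ 2)) (-(ε ^ 2 * 1)) x := by
      simpa using (((hasDerivAt_id' x).sub_const (s ^ 2)).const_mul (ε ^ 2)).const_sub c
    have gden2 : HasDerivAt (fun t : ℝ => c - ε ^ 2 * t) (-(ε ^ 2 * 1)) x := by
      simpa using ((hasDerivAt_id' x).const_mul (ε ^ 2)).const_sub c
    have hneA : Real.sqrt (c - x + s ^ 2) * (c - x) ≠ 0 := mul_ne_zero ha.ne' hu
    have hneB : Real.sqrt (c - ε ^ 2 * (x - s ^ 2)) * (c - ε ^ 2 * x) ≠ 0 :=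
      mul_ne_zero hb.ne' hv
    have denA := (sqrtD' g1 hA.ne').mul gden1
    have denB := (sqrtD' g2 hB.ne').mul gden2
    have termA := (hasDerivAt_const x s).div denA (by beta_reduce at denA ⊢; exact hneA)
    have termB := ((hasDerivAt_const x s).div denB
      (by beta_reduce at denB ⊢; exact hneB)).const_mul (ε ^ 3)
    have raw := hh.add ((termA.sub termB).const_mul (1 / 2))
    simp only [psi']
    refine raw.congr_deriv ?_
    beta_reduce
    simp only [Pi.mul_apply]
    have e1' : c - x = Real.sqrt (c - x + s ^ 2) ^ 2 - s ^ 2 := by rw [ha2]; ring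
    have e2' : c - ε ^ 2 * x =
        Real.sqrt (c - ε ^ 2 * (x - s ^ 2)) ^ 2 - ε ^ 2 * s ^ 2 := by rw [hb2]; ring
    have hu2 : Real.sqrt (c - x + s ^ 2) ^ 2 - s ^ 2 ≠ 0 := e1' ▸ hu
    have hv2 : Real.sqrt (c - ε ^ 2 * (x - s ^ 2)) ^ 2 - ε ^ 2 * s ^ 2 ≠ 0 := e2' ▸ hv
    set a := Real.sqrt (c - x + s ^ 2) with haa
    set b := Real.sqrt (c - ε ^ 2 * (x - s ^ 2)) with hbb
    rw [e1', e2']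
    field_simp
    ring
  -- identify the three derivative quantities
  have e22 : d2 (d2 φ) x s = (1 / 2) * (1 / Real.sqrt (c - x + s ^ 2) ^ 3 -
      ε ^ 3 * (1 / Real.sqrt (c - ε ^ 2 * (x - s ^ 2)) ^ 3)) := by
    have h := Filter.EventuallyEq.deriv_eq heqs
    show deriv (fun t => d2 φ x t) s = _
    rw [h, H22.deriv]
  have e1 : d1 φ x s = deriv htilde x * s + (1 / 4) * ((c - x + 2 * s ^ 2) /
        (Real.sqrt (c - x + s ^ 2) * (c - x) ^ 2) -
      ε ^ 3 * ((c - ε ^ 2 * x + 2 * ε ^ 2 * s ^ 2) /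
        (Real.sqrt (c - ε ^ 2 * (x - s ^ 2)) * (c - ε ^ 2 * x) ^ 2))) := by
    simp only [d1]; exact H1.deriv
  have e12 : d1 (d2 φ) x s = deriv htilde x + (s / 4) * ((3 * (c - x) + 2 * s ^ 2) /
        (Real.sqrt (c - x + s ^ 2) ^ 3 * (c - x) ^ 2) -
      ε ^ 5 * ((3 * (c - ε ^ 2 * x) + 2 * ε ^ 2 * s ^ 2) /
        (Real.sqrt (c - ε ^ 2 * (x - s ^ 2)) ^ 3 * (c - ε ^ 2 * x) ^ 2))) := by
    have h := Filter.EventuallyEq.deriv_eq heqx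
    show deriv (fun t => d2 φ t s) x = _
    rw [h, H12.deriv]
  have e1' : c - x = Real.sqrt (c - x + s ^ 2) ^ 2 - s ^ 2 := by rw [ha2]; ring
  have e2' : c - ε ^ 2 * x =
      Real.sqrt (c - ε ^ 2 * (x - s ^ 2)) ^ 2 - ε ^ 2 * s ^ 2 := by rw [hb2]; ring
  have hu2 : Real.sqrt (c - x + s ^ 2) ^ 2 - s ^ 2 ≠ 0 := e1' ▸ hu
  have hv2 : Real.sqrt (c - ε ^ 2 * (x - s ^ 2)) ^ 2 - ε ^ 2 * s ^ 2 ≠ 0 := e2' ▸ hv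
  constructor
  · rw [e22, e1, e12]
    set a := Real.sqrt (c - x + s ^ 2) with haa
    set b := Real.sqrt (c - ε ^ 2 * (x - s ^ 2)) with hbb
    rw [e1', e2']
    field_simp
    ring
  · rw [e2, hφ]
    simp only [psi']
    set a := Real.sqrt (c - x + s ^ 2) with haa
    set b := Real.sqrt (c - ε ^ 2 * (x - s ^ 2)) with hbb
    rw [e1', e2']
    have hv3 : b ^ 2 - s ^ 2 * ε ^ 2 ≠ 0 := by rwa [mul_comm (ε ^ 2)] at hv2
    field_simp
    ring
end

section
/- Let n ≥ 1, let (a_{ij}) be a symmetric positive definite real n×n matrix, and let b = (b_i) ∈ ℝⁿ. For y ∈ ℝⁿ \ {0} set α(y) := √(Σ a_{ij} y^i y^j), β(y) := Σ b_i y^i, s(y) := β(y)/α(y), and y_i := Σ_j a_{ij} y^j. Then for all indices j, k, l and all y ≠ 0, the third partial derivative of s satisfies: ∂³s/∂y^j∂y^k∂y^l = α^{−5}·{ [α(3s·y_j − α·b_j)·a_{lk} + 3·b_k·y_l·y_j] + [α(3s·y_k − α·b_k)·a_{jl} + 3·b_l·y_j·y_k] + [α(3s·y_l − α·b_l)·a_{kj}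 + 3·b_j·y_k·y_l] − (15s/α)·y_k·y_l·y_j }. -/
open Set

/-- Partial derivative of `f : (Fin n → ℝ) → ℝ` in the `i`-th coordinate
direction. -/
noncomputable def pd {n : ℕ} (i : Fin n) (f : (Fin n → ℝ) → ℝ)
    (y : Fin n → ℝ) : ℝ :=
  fderiv ℝ f y (Pi.single i 1)

/-!
Where `Q = α²` is positive, `s = β · Q^(-1/2)`. The derivatives of the building blocks are
`∂_l β = b_l`, `∂_l y_i = a_il` and, by the symmetry of `(a_ij)`, `∂_l Q^r = 2r Q^(r-1) y_l`, so
three differentiations of `s` are mechanical, and `Q^(-m/2) = α^(-m)` turns the result into the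
stated formula. Since `pd` only sees the germ of a function, the first and second derivatives must
be identified on the open set `{Q > 0}`, not only at `y`.
-/

namespace AlphaBeta

open ContinuousLinearMap

variable {n : ℕ}

theorem pd_eq_of_hasFDerivAt {f : (Fin n → ℝ) → ℝ} {L : (Fin n → ℝ) →L[ℝ] ℝ}
    {x : Fin n → ℝ} (h : HasFDerivAt f L x) (i : Fin n) :
    pd i f x = L (Pi.single i 1) := by
  rw [pd, h.fderiv]

theorem eqOn_pd_of_eqOn {f g : (Fin n → ℝ) → ℝ} {U : Set (Fin n → ℝ)} (hU : IsOpen U)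
    (h : EqOn f g U) (i : Fin n) : EqOn (pd i f) (pd i g) U := fun x hx => by
  rw [pd, pd, (h.eventuallyEq_of_mem (hU.mem_nhds hx)).fderiv_eq]

noncomputable def linForm (c : Fin n → ℝ) : (Fin n → ℝ) →L[ℝ] ℝ :=
  ∑ i, c i • proj i

@[simp]
theorem linForm_apply (c x : Fin n → ℝ) : linForm c x = ∑ i, c i * x i := by
  simp [linForm]

@[simp]
theorem linForm_single (c : Fin n → ℝ) (l : Fin n) : linForm c (Pi.single l 1) = c l := by
  simp [Pi.single_apply]

noncomputable def quadForm (a : Fin n → Fin n → ℝ) (x : Fin n → ℝ) : ℝ :=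
  ∑ i, ∑ j, a i j * x i * x j

theorem continuous_quadForm (a : Fin n → Fin n → ℝ) : Continuous (quadForm a) := by
  unfold quadForm; fun_prop

theorem hasFDerivAt_quadForm {a : Fin n → Fin n → ℝ} (hsymm : ∀ i j, a i j = a j i)
    (x : Fin n → ℝ) :
    HasFDerivAt (quadForm a) ((2 : ℝ) • linForm fun i => linForm (a i) x) x := by
  have h : HasFDerivAt (fun x => ∑ i, proj i x * linForm (a i) x)
      (∑ i, (proj i x • linForm (a i) + linForm (a i) x • proj i)) x :=
    HasFDerivAt.fun_sum fun i _ => (proj i).hasFDerivAt.mul (linForm (a i)).hasFDerivAt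
  convert h using 1
  · ext x
    simp only [quadForm, proj_apply, linForm_apply, Finset.mul_sum]
    exact Finset.sum_congr rfl fun i _ => Finset.sum_congr rfl fun j _ => by ring
  · ext v
    have hswap : ∑ i, x i * ∑ j, a i j * v j = ∑ j, (∑ i, a j i * x i) * v j := by
      simp only [Finset.mul_sum, Finset.sum_mul]
      rw [Finset.sum_comm]
      exact Finset.sum_congr rfl fun j _ => Finset.sum_congr rfl fun i _ => by
        rw [hsymm]; ring
    simp only [smul_apply, sum_apply, add_apply, proj_apply, linForm_apply, smul_eq_mul,
      Finset.sum_add_distrib, hswap]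
    ring

theorem hasFDerivAt_quadForm_rpow {a : Fin n → Fin n → ℝ} (hsymm : ∀ i j, a i j = a j i)
    {x : Fin n → ℝ} (hx : 0 < quadForm a x) (r : ℝ) :
    HasFDerivAt (fun x => quadForm a x ^ r)
      ((2 * r * quadForm a x ^ (r - 1)) • linForm fun i => linForm (a i) x) x := by
  refine ((Real.hasDerivAt_rpow_const (Or.inl hx.ne')).comp_hasFDerivAt x
    (hasFDerivAt_quadForm hsymm x)).congr_fderiv ?_
  rw [smul_smul]
  congr 1
  ring

section Ratio

-- `linForm b` is `β`, and `linForm (a l)` is `y ↦ y_l = a_lj y^j`.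

variable (a : Fin n → Fin n → ℝ) (b : Fin n → ℝ)

noncomputable def ratio (x : Fin n → ℝ) : ℝ :=
  linForm b x * quadForm a x ^ (-(1 : ℝ) / 2)

noncomputable def ratioPd (l : Fin n) (x : Fin n → ℝ) : ℝ :=
  b l * quadForm a x ^ (-(1 : ℝ) / 2)
    - linForm b x * linForm (a l) x * quadForm a x ^ (-(3 : ℝ) / 2)

noncomputable def ratioPd2 (k l : Fin n) (x : Fin n → ℝ) : ℝ :=
  -((b l * linForm (a k) x + b k * linForm (a l) x + linForm b x * a l k)
      * quadForm a x ^ (-(3 : ℝ) / 2))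
    + 3 * (linForm b x * linForm (a l) x * linForm (a k) x) * quadForm a x ^ (-(5 : ℝ) / 2)

variable {a} (hsymm : ∀ i j, a i j = a j i) {x : Fin n → ℝ} (hx : 0 < quadForm a x)
include hsymm hx

theorem pd_ratio (l : Fin n) : pd l (ratio a b) x = ratioPd a b l x := by
  have h : HasFDerivAt (ratio a b) _ x := (linForm b).hasFDerivAt.fun_mul
    (hasFDerivAt_quadForm_rpow hsymm hx (-(1 : ℝ) / 2))
  rw [pd_eq_of_hasFDerivAt h]
  simp only [add_apply, smul_apply, smul_eq_mul, linForm_single]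
  rw [ratioPd, show -(1 : ℝ) / 2 - 1 = -(3 : ℝ) / 2 by norm_num]
  ring

theorem pd_ratioPd (k l : Fin n) : pd k (ratioPd a b l) x = ratioPd2 a b k l x := by
  have h : HasFDerivAt (ratioPd a b l) _ x :=
    ((hasFDerivAt_quadForm_rpow hsymm hx (-(1 : ℝ) / 2)).const_mul (b l)).fun_sub
      (((linForm b).hasFDerivAt.fun_mul (linForm (a l)).hasFDerivAt).fun_mul
        (hasFDerivAt_quadForm_rpow hsymm hx (-(3 : ℝ) / 2)))
  rw [pd_eq_of_hasFDerivAt h]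
  simp only [add_apply, sub_apply, smul_apply, smul_eq_mul, linForm_single]
  rw [ratioPd2, show -(1 : ℝ) / 2 - 1 = -(3 : ℝ) / 2 by norm_num,
    show -(3 : ℝ) / 2 - 1 = -(5 : ℝ) / 2 by norm_num]
  ring

theorem pd_ratioPd2 (j k l : Fin n) :
    pd j (ratioPd2 a b k l) x =
      -((b l * a k j + b k * a l j + b j * a l k) * quadForm a x ^ (-(3 : ℝ) / 2))
      + 3 * (b l * linForm (a k) x * linForm (a j) x + b k * linForm (a l) x * linForm (a j) x
          + linForm b x * a l k * linForm (a j) x + b j * linForm (a l) x * linForm (a k) x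
          + linForm b x * a l j * linForm (a k) x + linForm b x * linForm (a l) x * a k j)
        * quadForm a x ^ (-(5 : ℝ) / 2)
      - 15 * (linForm b x * linForm (a l) x * linForm (a k) x * linForm (a j) x)
        * quadForm a x ^ (-(7 : ℝ) / 2) := by
  have hβ := (linForm b).hasFDerivAt (x := x)
  have hY (i : Fin n) := (linForm (a i)).hasFDerivAt (x := x)
  have hlin := (((hY k).const_mul (b l)).fun_add ((hY l).const_mul (b k))).fun_add
    (hβ.mul_const (a l k))
  have hcubic := (hβ.fun_mul (hY l)).fun_mul (hY k)
  have h : HasFDerivAt (ratioPd2 a b k l) _ x :=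
    (hlin.fun_mul (hasFDerivAt_quadForm_rpow hsymm hx (-(3 : ℝ) / 2))).fun_neg.fun_add
      ((hcubic.const_mul 3).fun_mul (hasFDerivAt_quadForm_rpow hsymm hx (-(5 : ℝ) / 2)))
  rw [pd_eq_of_hasFDerivAt h]
  simp only [add_apply, neg_apply, smul_apply, smul_eq_mul, linForm_single]
  rw [show -(3 : ℝ) / 2 - 1 = -(5 : ℝ) / 2 by norm_num,
    show -(5 : ℝ) / 2 - 1 = -(7 : ℝ) / 2 by norm_num]
  ring

end Ratio

theorem rpow_neg_half_eq_inv_sqrt_pow {q : ℝ} (hq : 0 ≤ q) (m : ℕ) :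
    q ^ (-(m : ℝ) / 2) = (√q ^ m)⁻¹ := by
  rw [Real.sqrt_eq_rpow, ← Real.rpow_natCast, ← Real.rpow_mul hq, ← Real.rpow_neg hq]
  ring_nf

end AlphaBeta

open AlphaBeta in
theorem stmt_19_general (n : ℕ) (a : Fin n → Fin n → ℝ)
    (hsymm : ∀ i j, a i j = a j i)
    (hpos : ∀ y : Fin n → ℝ, y ≠ 0 → 0 < ∑ i, ∑ j, a i j * y i * y j)
    (b : Fin n → ℝ)
    (α β sf : (Fin n → ℝ) → ℝ) (yl : (Fin n → ℝ) → Fin n → ℝ)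
    (hα : ∀ y, α y = Real.sqrt (∑ i, ∑ j, a i j * y i * y j))
    (hβ : ∀ y, β y = ∑ i, b i * y i)
    (hsf : ∀ y, sf y = β y / α y)
    (hyl : ∀ y i, yl y i = ∑ j, a i j * y j) :
    ∀ y : Fin n → ℝ, y ≠ 0 → ∀ j k l : Fin n,
      pd j (pd k (pd l sf)) y =
        (1 / α y ^ 5) *
          ((α y * (3 * sf y * yl y j - α y * b j) * a l k +
              3 * b k * yl y l * yl y j) +
           (α y * (3 * sf y * yl y k - α y * b k) * a j l +
              3 * b l * yl y j * yl y k) +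
           (α y * (3 * sf y * yl y l - α y * b l) * a k j +
              3 * b j * yl y k * yl y l) -
           (15 * sf y / α y) * (yl y k * yl y l * yl y j)) := by
  intro y hy j k l
  set U := {x | 0 < quadForm a x}
  have hU : IsOpen U := isOpen_lt continuous_const (continuous_quadForm a)
  have hsf_ratio : EqOn sf (ratio a b) U := fun x hx => by
    rw [hsf, hβ, hα, ratio, linForm_apply, Real.sqrt_eq_rpow, div_eq_mul_inv, ← quadForm,
      ← Real.rpow_neg hx.le]
    norm_num
  have h1 : EqOn (pd l sf) (ratioPd a b l) U :=
    (eqOn_pd_of_eqOn hU hsf_ratio l).trans fun x hx => pd_ratio b hsymm hx l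
  have h2 : EqOn (pd k (pd l sf)) (ratioPd2 a b k l) U :=
    (eqOn_pd_of_eqOn hU h1 k).trans fun x hx => pd_ratioPd b hsymm hx k l
  have hyU : y ∈ U := hpos y hy
  rw [eqOn_pd_of_eqOn hU h2 j hyU, pd_ratioPd2 b hsymm hyU]
  have e3 := rpow_neg_half_eq_inv_sqrt_pow hyU.le 3
  have e5 := rpow_neg_half_eq_inv_sqrt_pow hyU.le 5
  have e7 := rpow_neg_half_eq_inv_sqrt_pow hyU.le 7
  have hαy : α y = √(quadForm a y) := hα y
  rw [← hαy] at e3 e5 e7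
  push_cast at e3 e5 e7
  have hαpos : 0 < α y := hαy ▸ Real.sqrt_pos.2 hyU
  simp only [e3, e5, e7, hsf y, hβ, linForm_apply, ← hyl, hsymm j l]
  field_simp
  ring

/-- formula (3.13): the third coordinate partial derivatives of
s = β/α, where α(y) = √(Σ aᵢⱼyⁱyʲ) and β(y) = Σ bᵢyⁱ with (aᵢⱼ) symmetric
positive definite, are given by the displayed cyclic formula. -/
theorem stmt_19 (n : ℕ) (hn : 1 ≤ n) (a : Fin n → Fin n → ℝ)
    (hsymm : ∀ i j, a i j = a j i)
    (hpos : ∀ y : Fin n → ℝ, y ≠ 0 → 0 < ∑ i, ∑ j, a i j * y i * y j)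
    (b : Fin n → ℝ)
    (α β sf : (Fin n → ℝ) → ℝ) (yl : (Fin n → ℝ) → Fin n → ℝ)
    (hα : ∀ y, α y = Real.sqrt (∑ i, ∑ j, a i j * y i * y j))
    (hβ : ∀ y, β y = ∑ i, b i * y i)
    (hsf : ∀ y, sf y = β y / α y)
    (hyl : ∀ y i, yl y i = ∑ j, a i j * y j) :
    ∀ y : Fin n → ℝ, y ≠ 0 → ∀ j k l : Fin n,
      pd j (pd k (pd l sf)) y =
        (1 / α y ^ 5) *
          ((α y * (3 * sf y * yl y j - α y * b j) * a l k +
              3 * b k * yl y l * yl y j) +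
           (α y * (3 * sf y * yl y k - α y * b k) * a j l +
              3 * b l * yl y j * yl y k) +
           (α y * (3 * sf y * yl y l - α y * b l) * a k j +
              3 * b j * yl y k * yl y l) -
           (15 * sf y / α y) * (yl y k * yl y l * yl y j)) :=
  stmt_19_general n a hsymm hpos b α β sf yl hα hβ hsf hyl
end
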